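/- arXiv:1003.3576 — 13 statements merged into one kernel-verified Lean document; each statement's English description precedes it below -/
import Mathlib

section
/- Let G be a finite abelian group, let A ⊆ G be a Sidon set, and set δ = √|G| − |A|. Then for all subsets B, B′ ⊆ G, the number N = |{(b,b′) ∈ B × B′ : b + b′ ∈ A}| satisfies |N − |A||B||B′|/|G|| ≤ (1 + max(0,δ)·|B|/|G|) · √(|B||B′|) · |G|^{1/4}. -/
/-!
Let `r(x) = #{b ∈ B | b + x ∈ A}`, so that `N = ∑_{y ∈ B'} r(y)` and `∑_x r(x) = |A||B|`. Two
distinct translates of a Sidon set meet in at most one point, whence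
`∑_x r(x)² ≤ |A||B| + |B|(|B| - 1)`; injectivity of `(a, a') ↦ a - a'` off the diagonal gives
`|A|(|A| - 1) ≤ |G| - 1`, so `|A| - 1 ≤ √|G|`. Cauchy–Schwarz over `B'` bounds
`(N - |A||B||B'|/|G|)²` by `|B'|` times the variance of `r`, and the two counting facts bound that
variance by `(1 + max(0,δ)|B|/|G|)² |B| √|G|`.
-/

open Finset

theorem sq_sum_sub_mean_le {ι : Type*} [Fintype ι] (f : ι → ℝ) (s : Finset ι) :
    (∑ i ∈ s, (f i - (∑ j, f j) / Fintype.card ι)) ^ 2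
      ≤ #s * (∑ i, f i ^ 2 - (∑ i, f i) ^ 2 / Fintype.card ι) := by
  set μ := (∑ j, f j) / Fintype.card ι
  have hvar : ∑ i, (f i - μ) ^ 2 = ∑ i, f i ^ 2 - (∑ i, f i) ^ 2 / Fintype.card ι := by
    rcases isEmpty_or_nonempty ι with hι | hι
    · simp
    have hn : (Fintype.card ι : ℝ) ≠ 0 := by positivity
    simp only [sub_sq, sum_add_distrib, sum_sub_distrib, ← sum_mul, ← mul_sum, sum_const,
      card_univ, nsmul_eq_mul, μ]
    field_simp
    ring
  calc (∑ i ∈ s, (f i - μ)) ^ 2 ≤ #s * ∑ i ∈ s, (f i - μ) ^ 2 :=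
        sq_sum_le_card_mul_sum_sq (s := s) (f := fun i => f i - μ)
    _ ≤ #s * ∑ i, (f i - μ) ^ 2 := by
        gcongr
        exact subset_univ s
    _ = _ := by rw [hvar]

/-- Applied with `a = #A`, `b = #B`, `s = √|G|`. If `a ≤ s`, then `s² - a² = (s - a)(s + a)` is
at most `2s(s - a)`; if `a > s`, the term `(s² - a²) b / s²` is negative and `a - 1 ≤ s`
suffices. -/
theorem second_moment_le (a b s : ℝ) (hb : 0 ≤ b) (hs : 0 < s) (ha : a - 1 ≤ s) :
    a * b + b ^ 2 - b - (a * b) ^ 2 / s ^ 2 ≤ (1 + max 0 (s - a) * b / s ^ 2) ^ 2 * b * s := by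
  rcases le_total a s with has | hsa
  · rw [max_eq_right (sub_nonneg.2 has)]
    have hd : 0 ≤ (s - a) * b / s ^ 2 := by have := sub_nonneg.2 has; positivity
    have key : a * b + b ^ 2 - b - (a * b) ^ 2 / s ^ 2
        = b * (a - 1 + (s - a) * b / s ^ 2 * (s + a)) := by
      field_simp; ring
    rw [key]
    have : a - 1 + (s - a) * b / s ^ 2 * (s + a) ≤ (1 + (s - a) * b / s ^ 2) ^ 2 * s := by
      nlinarith [sq_nonneg ((s - a) * b / s ^ 2)]
    nlinarith
  · rw [max_eq_left (sub_nonpos.2 hsa), zero_mul, zero_div, add_zero, one_pow, one_mul]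
    have key : a * b + b ^ 2 - b - (a * b) ^ 2 / s ^ 2
        = b * (a - 1 - (a ^ 2 - s ^ 2) * b / s ^ 2) := by
      field_simp; ring
    rw [key]
    have : 0 ≤ (a ^ 2 - s ^ 2) * b / s ^ 2 := by
      have : s ^ 2 ≤ a ^ 2 := pow_le_pow_left₀ hs.le hsa 2
      have := sub_nonneg.2 this; positivity
    linarith [mul_nonneg hb this, mul_nonneg hb (sub_nonneg.2 ha)]

section Sidon

variable {G : Type*} [AddCommGroup G]

def IsSidon (A : Finset G) : Prop :=
  ∀ a ∈ A, ∀ b ∈ A, ∀ c ∈ A, ∀ d ∈ A, a - b = c - d → a - b ≠ 0 → a = c ∧ b = d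

variable [DecidableEq G]

def overlap (A B : Finset G) (x : G) : ℕ := #{b ∈ B | b + x ∈ A}

theorem card_filter_add_mem_product (A B B' : Finset G) :
    #{p ∈ B ×ˢ B' | p.1 + p.2 ∈ A} = ∑ y ∈ B', overlap A B y := by
  simp only [overlap, card_filter, sum_product]
  exact sum_comm

variable [Fintype G]

theorem card_filter_add_mem_univ (A : Finset G) (c : G) : #{x | c + x ∈ A} = #A :=
  card_nbij' (c + ·) (-c + ·) (fun x hx => by simpa using hx) (fun a ha => by simpa using ha)
    (fun x _ => by simp) (fun a _ => by simp)

theorem sum_overlap (A B : Finset G) : ∑ x, overlap A B x = #A * #B := by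
  simp only [overlap, card_filter]
  rw [sum_comm]
  simp only [← card_filter, card_filter_add_mem_univ, sum_const, smul_eq_mul, mul_comm]

theorem sum_overlap_sq (A B : Finset G) :
    ∑ x, overlap A B x ^ 2 = ∑ b₁ ∈ B, ∑ b₂ ∈ B, #{x | b₁ + x ∈ A ∧ b₂ + x ∈ A} := by
  simp only [overlap, card_filter, sq, sum_mul_sum, ite_zero_mul_ite_zero, mul_one]
  rw [sum_comm]
  exact sum_congr rfl fun _ _ => sum_comm

variable {A : Finset G}

theorem IsSidon.card_offDiag_le (hA : IsSidon A) : #A.offDiag ≤ Fintype.card G - 1 := by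
  rw [← card_univ, ← card_erase_of_mem (mem_univ 0)]
  refine card_le_card_of_injOn (fun p => p.1 - p.2) (fun p hp => ?_) (fun p hp q hq hpq => ?_)
  · simp only [mem_coe, mem_offDiag] at hp
    simp [sub_eq_zero, hp.2.2]
  · simp only [mem_coe, mem_offDiag] at hp hq
    obtain ⟨h1, h2⟩ := hA _ hp.1 _ hp.2.1 _ hq.1 _ hq.2.1 hpq (sub_ne_zero.2 hp.2.2)
    exact Prod.ext h1 h2

theorem IsSidon.card_sub_one_le_sqrt (hA : IsSidon A) :
    (#A : ℝ) - 1 ≤ √(Fintype.card G) := by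
  have hoff : #A * #A - #A ≤ Fintype.card G - 1 := offDiag_card A ▸ hA.card_offDiag_le
  have hG : 1 ≤ Fintype.card G := Fintype.card_pos
  have hA' : #A ≤ #A * #A := Nat.le_mul_self _
  have : ((#A : ℝ) - 1) ^ 2 ≤ Fintype.card G := by
    have : (#A * #A + 1 : ℝ) ≤ Fintype.card G + #A := by
      exact_mod_cast (by omega : #A * #A + 1 ≤ Fintype.card G + #A)
    nlinarith [(#A).cast_nonneg (α := ℝ)]
  exact (le_abs_self _).trans (Real.abs_le_sqrt this)

theorem IsSidon.card_filter_add_mem_and_le_one (hA : IsSidon A) {b₁ b₂ : G} (hb : b₁ ≠ b₂) :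
    #{x | b₁ + x ∈ A ∧ b₂ + x ∈ A} ≤ 1 := by
  refine card_le_one.2 fun x hx y hy => ?_
  simp only [mem_filter, mem_univ, true_and] at hx hy
  have hne : (b₁ + x) - (b₂ + x) ≠ 0 := by simpa [sub_eq_zero] using hb
  exact add_left_cancel (hA _ hx.1 _ hx.2 _ hy.1 _ hy.2 (by abel) hne).1

theorem IsSidon.sum_card_filter_add_mem_and_add_one_le (hA : IsSidon A) {B : Finset G}
    {b₁ : G} (hb₁ : b₁ ∈ B) :
    ∑ b₂ ∈ B, #{x | b₁ + x ∈ A ∧ b₂ + x ∈ A} + 1 ≤ #A + #B := by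
  rw [← add_sum_erase B _ hb₁, ← card_erase_add_one hb₁]
  simp only [and_self, card_filter_add_mem_univ]
  have := sum_le_card_nsmul (B.erase b₁) _ 1
    fun b₂ hb₂ => hA.card_filter_add_mem_and_le_one (ne_of_mem_erase hb₂).symm
  simp only [smul_eq_mul, mul_one] at this
  omega

theorem IsSidon.sum_overlap_sq_add_card_le (hA : IsSidon A) (B : Finset G) :
    ∑ x, overlap A B x ^ 2 + #B ≤ #A * #B + #B ^ 2 := by
  calc ∑ x, overlap A B x ^ 2 + #B
      = ∑ b₁ ∈ B, (∑ b₂ ∈ B, #{x | b₁ + x ∈ A ∧ b₂ + x ∈ A} + 1) := by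
        rw [sum_overlap_sq, sum_add_distrib, card_eq_sum_ones]
    _ ≤ ∑ _b₁ ∈ B, (#A + #B) :=
        sum_le_sum fun _ hb₁ => hA.sum_card_filter_add_mem_and_add_one_le hb₁
    _ = #A * #B + #B ^ 2 := by rw [sum_const, smul_eq_mul]; ring

end Sidon

/-- Let `G` be a finite abelian group, `A ⊆ G` a Sidon set, and
`δ = √|G| − |A|`. Then for all `B, B' ⊆ G`, the number
`N = |{(b,b') ∈ B × B' : b + b' ∈ A}|` satisfies
`|N − |A||B||B'|/|G|| ≤ (1 + max(0,δ)·|B|/|G|) · √(|B||B'|) · |G|^{1/4}`. -/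
theorem sidon_count_pairs {G : Type*} [AddCommGroup G] [Fintype G] [DecidableEq G]
    (A : Finset G)
    (hA : ∀ a ∈ A, ∀ b ∈ A, ∀ c ∈ A, ∀ d ∈ A,
      a - b = c - d → a - b ≠ 0 → a = c ∧ b = d)
    (B B' : Finset G) :
    |((((B ×ˢ B').filter (fun x => x.1 + x.2 ∈ A)).card : ℝ)
        - (A.card : ℝ) * B.card * B'.card / (Fintype.card G : ℝ))|
      ≤ (1 + max 0 (Real.sqrt (Fintype.card G) - (A.card : ℝ)) * (B.card : ℝ)
            / (Fintype.card G : ℝ))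
        * Real.sqrt ((B.card : ℝ) * (B'.card : ℝ))
        * (Fintype.card G : ℝ) ^ ((1 : ℝ) / 4) := by
  have hSidon : IsSidon A := hA
  set n : ℝ := (Fintype.card G : ℝ)
  have hn : 0 < n := by positivity
  have hsum : ∑ x, (overlap A B x : ℝ) = #A * #B := by exact_mod_cast sum_overlap A B
  have hsq : ∑ x, (overlap A B x : ℝ) ^ 2 + #B ≤ #A * #B + #B ^ 2 := by
    exact_mod_cast hSidon.sum_overlap_sq_add_card_le B
  have hmoment := second_moment_le #A #B √n (by positivity) (by positivity)
    hSidon.card_sub_one_le_sqrt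
  have hquarter : (n ^ ((1 : ℝ) / 4)) ^ 2 = √n := by
    rw [Real.sqrt_eq_rpow, ← Real.rpow_mul_natCast hn.le]; norm_num
  refine abs_le_of_sq_le_sq ?_ (by positivity)
  calc (#{p ∈ B ×ˢ B' | p.1 + p.2 ∈ A} - #A * #B * #B' / n : ℝ) ^ 2
      = (∑ y ∈ B', ((overlap A B y : ℝ) - (∑ x, (overlap A B x : ℝ)) / n)) ^ 2 := by
        rw [card_filter_add_mem_product, hsum, sum_sub_distrib, sum_const, nsmul_eq_mul]
        push_cast; ring
    _ ≤ #B' * (∑ x, (overlap A B x : ℝ) ^ 2 - (∑ x, (overlap A B x : ℝ)) ^ 2 / n) :=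
        sq_sum_sub_mean_le _ _
    _ ≤ #B' * ((1 + max 0 (√n - #A) * #B / n) ^ 2 * #B * √n) := by
        rw [Real.sq_sqrt hn.le] at hmoment
        gcongr
        rw [hsum]
        linarith
    _ = _ := by rw [mul_pow, mul_pow, Real.sq_sqrt (by positivity), hquarter]; ring
end

section
/- Let q be an odd prime power and let f, h ∈ F_q[X] be polynomials of degree at most 2 such that for every pair (λ, μ) ∈ F_q × F_q with (λ, μ) ≠ (0, 0) the polynomial λ·f + μ·h is not constant. Then the set A = {(f(x), h(x)) : x ∈ F_q} is a Sidon set in the additive group F_q × F_q. -/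
/-!
The map `x ↦ (f x, h x)` is the parabola `x ↦ (x, x²)` followed by the affine map
`(u, v) ↦ (f₁ u + f₂ v + f₀, h₁ u + h₂ v + h₀)`, and the non-degeneracy hypothesis says exactly
that its linear part is invertible. Injective affine maps preserve Sidon sets, so it suffices that
the parabola is Sidon: equal differences give `x + w = y + z` and `x² + w² = y² + z²`, hence, as
`2` is invertible, `x w = y z`, so `{x, w} = {y, z}` are the roots of the same quadratic.
-/

open Polynomial Function

def IsSidonSet {G : Type*} [AddGroup G] (A : Set G) : Prop :=
  ∀ a ∈ A, ∀ b ∈ A, ∀ c ∈ A, ∀ d ∈ A,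
    a - b = c - d → a - b ≠ 0 → a = c ∧ b = d

theorem IsSidonSet.image_add_const {G H : Type*} [AddGroup G] [AddGroup H] {A : Set G}
    (hA : IsSidonSet A) (φ : G →+ H) (hφ : Injective φ) (t : H) :
    IsSidonSet ((fun g => φ g + t) '' A) := by
  rintro _ ⟨a, ha, rfl⟩ _ ⟨b, hb, rfl⟩ _ ⟨c, hc, rfl⟩ _ ⟨d, hd, rfl⟩ hdiff hne
  simp only [add_sub_add_right_eq_sub, ← map_sub] at hdiff hne
  obtain ⟨rfl, rfl⟩ := hA a ha b hb c hc d hd (hφ hdiff) fun h => hne (by rw [h, map_zero])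
  exact ⟨rfl, rfl⟩

theorem isSidonSet_range_sq {R : Type*} [CommRing R] [IsDomain R] (h2 : (2 : R) ≠ 0) :
    IsSidonSet (Set.range fun x : R => (x, x ^ 2)) := by
  rintro _ ⟨x, rfl⟩ _ ⟨y, rfl⟩ _ ⟨z, rfl⟩ _ ⟨w, rfl⟩ hdiff hne
  dsimp only at hdiff hne
  obtain ⟨hsum, hsq⟩ := Prod.mk.inj hdiff
  have hprod : x * w = y * z :=
    mul_left_cancel₀ h2 (by linear_combination (x + w + y + z) * hsum - hsq)
  have hroots : (x - y) * (x - z) = 0 := by linear_combination x * hsum - hprod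
  rcases mul_eq_zero.mp hroots with hxy | hxz
  · rw [sub_eq_zero.mp hxy, sub_self] at hne
    exact absurd rfl hne
  · obtain rfl := sub_eq_zero.mp hxz
    obtain rfl : w = y := by linear_combination hsum
    exact ⟨rfl, rfl⟩

theorem injective_mul_add_mul_of_det_ne_zero {R : Type*} [CommRing R] [IsDomain R] {a b c d : R}
    (hdet : a * d - b * c ≠ 0) :
    Injective fun p : R × R => (a * p.1 + b * p.2, c * p.1 + d * p.2) := by
  intro p q hpq
  obtain ⟨h1, h2⟩ := Prod.mk.inj hpq
  ext
  · exact mul_left_cancel₀ hdet (by linear_combination d * h1 - b * h2)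
  · exact mul_left_cancel₀ hdet (by linear_combination a * h2 - c * h1)

namespace Polynomial

variable {R : Type*} [Semiring R] {p : R[X]}

theorem eval_eq_of_degree_le_two (hp : p.degree ≤ 2) (x : R) :
    p.eval x = p.coeff 0 + p.coeff 1 * x + p.coeff 2 * x ^ 2 := by
  rw [eval_eq_sum_range' (Nat.lt_succ_of_le (natDegree_le_of_degree_le hp))]
  simp [Finset.sum_range_succ]

theorem eq_C_of_degree_le_two_of_coeff_eq_zero (hp : p.degree ≤ 2) (h1 : p.coeff 1 = 0)
    (h2 : p.coeff 2 = 0) : p = C (p.coeff 0) := by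
  refine eq_C_of_degree_le_zero (degree_le_iff_coeff_zero _ _ |>.mpr fun n hn => ?_)
  match n, hn with
  | 1, _ => exact h1
  | 2, _ => exact h2
  | n + 3, _ => exact coeff_eq_zero_of_degree_lt (hp.trans_lt (by exact_mod_cast by omega))

end Polynomial

theorem coeff_one_mul_coeff_two_sub_ne_zero_of_forall_ne_C {R : Type*} [CommRing R] [IsDomain R]
    {f h : R[X]} (hf : f.degree ≤ 2) (hh : h.degree ≤ 2)
    (hnc : ∀ l m : R, (l, m) ≠ (0, 0) → ∀ c : R, C l * f + C m * h ≠ C c) :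
    f.coeff 1 * h.coeff 2 - f.coeff 2 * h.coeff 1 ≠ 0 := by
  intro hdet
  obtain ⟨v, hv, hker⟩ := Matrix.exists_vecMul_eq_zero_iff.mpr
    (show !![f.coeff 1, f.coeff 2; h.coeff 1, h.coeff 2].det = 0 by
      rwa [Matrix.det_fin_two_of])
  have hv' : (v 0, v 1) ≠ (0, 0) := fun h0 => hv (by ext i; fin_cases i <;> simp_all)
  -- the left kernel vector `v` kills the `X` and `X²` coefficients of `v 0 • f + v 1 • h`
  refine hnc (v 0) (v 1) hv' _ (eq_C_of_degree_le_two_of_coeff_eq_zero ?_ ?_ ?_)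
  · rw [← smul_eq_C_mul, ← smul_eq_C_mul]
    exact degree_add_le_of_degree_le ((degree_smul_le _ _).trans hf) ((degree_smul_le _ _).trans hh)
  · simpa [Matrix.vecMul, dotProduct, Fin.sum_univ_two] using congr_fun hker 0
  · simpa [Matrix.vecMul, dotProduct, Fin.sum_univ_two] using congr_fun hker 1

theorem FiniteField.two_ne_zero_of_odd_card {F : Type*} [Field F] [Fintype F]
    (hodd : Odd (Fintype.card F)) : (2 : F) ≠ 0 :=
  Ring.two_ne_zero fun hchar => by
    have := FiniteField.even_card_iff_char_two.mp hchar
    rw [Nat.odd_iff] at hodd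
    omega

/-- Let `q` be an odd prime power and `f, h ∈ F_q[X]` polynomials of
degree at most 2 such that `λ·f + μ·h` is not constant for any `(λ,μ) ≠ (0,0)`.
Then `A = {(f(x), h(x)) : x ∈ F_q}` is a Sidon set in `F_q × F_q`. -/
theorem sidon_polynomial_graph {F : Type*} [Field F] [Fintype F]
    (hodd : Odd (Fintype.card F))
    (f h : Polynomial F) (hf : f.degree ≤ 2) (hh : h.degree ≤ 2)
    (hnc : ∀ l m : F, (l, m) ≠ (0, 0) →
      ∀ c : F, Polynomial.C l * f + Polynomial.C m * h ≠ Polynomial.C c)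
    (A : Set (F × F))
    (hAdef : A = {p : F × F | ∃ x : F, p = (f.eval x, h.eval x)}) :
    ∀ a ∈ A, ∀ b ∈ A, ∀ c ∈ A, ∀ d ∈ A,
      a - b = c - d → a - b ≠ 0 → a = c ∧ b = d := by
  show IsSidonSet A
  let φ : F × F →+ F × F := AddMonoidHom.mk'
    (fun p => (f.coeff 1 * p.1 + f.coeff 2 * p.2, h.coeff 1 * p.1 + h.coeff 2 * p.2))
    fun p q => by ext <;> simp only [Prod.fst_add, Prod.snd_add] <;> ring
  have hA : A = (fun p => φ p + (f.coeff 0, h.coeff 0)) '' Set.range fun x : F => (x, x ^ 2) := by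
    rw [hAdef, ← Set.range_comp]
    ext p
    simp only [eval_eq_of_degree_le_two hf, eval_eq_of_degree_le_two hh, Set.mem_ofPred_eq,
      AddMonoidHom.mk'_apply, Prod.mk_add_mk, Set.mem_range, comp_apply, eq_comm, φ]
    exact exists_congr fun x => by ring_nf
  rw [hA]
  exact (isSidonSet_range_sq (FiniteField.two_ne_zero_of_odd_card hodd)).image_add_const φ
    (injective_mul_add_mul_of_det_ne_zero
      (coeff_one_mul_coeff_two_sub_ne_zero_of_forall_ne_C hf hh hnc)) _
end

section
/- Let q be a prime power and let g be a generator of the multiplicative group F_q^*. Then the set A = {(x, g^x) : x ∈ Z_{q−1}} is a Sidon set in the additive group Z_{q−1} × F_q, where g^x is well defined for x ∈ Z_{q−1} since g^{q−1} = 1. -/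
/-- Let `q` be a prime power and `g` a generator of `F_q^*`. Then
`A = {(x, g^x) : x ∈ Z_{q−1}}` is a Sidon set in the additive group `Z_{q−1} × F_q`. -/
theorem sidon_exponential_graph {F : Type*} [Field F] [Fintype F] {q : ℕ}
    (hq : Fintype.card F = q)
    (g : Fˣ) (hg : ∀ u : Fˣ, u ∈ Subgroup.zpowers g)
    (A : Set (ZMod (q - 1) × F))
    (hAdef : A = {p : ZMod (q - 1) × F |
      ∃ x : ZMod (q - 1), p = (x, ((g ^ x.val : Fˣ) : F))}) :
    ∀ a ∈ A, ∀ b ∈ A, ∀ c ∈ A, ∀ d ∈ A,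
      a - b = c - d → a - b ≠ 0 → a = c ∧ b = d := by
  subst hAdef
  haveI : Fintype Fˣ := Fintype.ofFinite _
  have hcard : Nat.card Fˣ = q - 1 := by rw [Nat.card_units, Nat.card_eq_fintype_card, hq]
  have horder : orderOf g = q - 1 := by
    rw [orderOf_eq_card_of_forall_mem_zpowers hg, hcard]
  have hq1 : 0 < q - 1 := hcard ▸ Nat.card_pos
  haveI : NeZero (q - 1) := ⟨hq1.ne'⟩
  have hinj : ∀ x y : ZMod (q - 1), g ^ x.val = g ^ y.val → x = y := by
    intro x y h
    have hmod := pow_eq_pow_iff_modEq.mp h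
    rw [horder] at hmod
    have hv : x.val = y.val := by
      have hx := ZMod.val_lt x
      have hy := ZMod.val_lt y
      rwa [Nat.ModEq, Nat.mod_eq_of_lt hx, Nat.mod_eq_of_lt hy] at hmod
    exact ZMod.val_injective _ hv
  have hadd : ∀ x y : ZMod (q - 1), g ^ (x + y).val = g ^ x.val * g ^ y.val := by
    intro x y
    rw [← pow_add]
    apply pow_eq_pow_iff_modEq.mpr
    rw [horder, ZMod.val_add]
    exact Nat.mod_modEq _ _
  rintro a ⟨x1, rfl⟩ b ⟨x2, rfl⟩ c ⟨x3, rfl⟩ d ⟨x4, rfl⟩ hsub hne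
  set u1 : F := ((g ^ x1.val : Fˣ) : F)
  set u2 : F := ((g ^ x2.val : Fˣ) : F)
  set u3 : F := ((g ^ x3.val : Fˣ) : F)
  set u4 : F := ((g ^ x4.val : Fˣ) : F)
  have h1 : x1 - x2 = x3 - x4 := congrArg Prod.fst hsub
  have h2 : u1 - u2 = u3 - u4 := congrArg Prod.snd hsub
  have heq : x1 + x4 = x3 + x2 := sub_eq_sub_iff_add_eq_add.mp h1
  have hu : g ^ x1.val * g ^ x4.val = g ^ x3.val * g ^ x2.val := by
    rw [← hadd, ← hadd, heq]
  have hu' : u1 * u4 = u3 * u2 := by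
    have := congrArg (Units.val) hu
    push_cast at this
    exact this
  by_cases hx : (g ^ x2.val : Fˣ) = g ^ x4.val
  · have h24 : x2 = x4 := hinj _ _ hx
    have h13 : x1 = x3 := by
      have := heq
      rw [h24] at this
      exact add_right_cancel this
    subst h24; subst h13
    exact ⟨rfl, rfl⟩
  · exfalso
    have hne24 : u2 ≠ u4 := fun h => hx (Units.ext (by push_cast; exact h))
    have hfac : (u3 - u4) * (u4 - u2) = 0 := by linear_combination hu' - u4 * h2
    have h34 : u3 = u4 := by
      rcases mul_eq_zero.mp hfac with h | h
      · exact sub_eq_zero.mp h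
      · exact absurd (sub_eq_zero.mp h).symm hne24
    have hx34 : x3 = x4 := hinj _ _ (Units.ext (by push_cast; exact h34))
    have hx12 : x1 = x2 := by
      have : x1 - x2 = 0 := by rw [h1, hx34, sub_self]
      exact sub_eq_zero.mp this
    apply hne
    have hu12 : u1 = u2 := congrArg (fun z : ZMod (q-1) => ((g ^ z.val : Fˣ) : F)) hx12
    rw [Prod.ext_iff]
    constructor
    · simp [hx12]
    · simp [hu12]
end

section
/- There exists an absolute constant C > 0 such that for every prime power q, every finite set P of points of F_q × F_q, and every finite set L of lines in F_q × F_q, the number of incidences I(P, L) = |{(p, l) ∈ P × L : p ∈ l}| satisfies |I(P, L) − |P||L|/q| ≤ C·√(|P||L|q). -/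
/-!
Let `n x` be the number of lines through the point `x`. Every line has `q` points and two
distinct lines share at most one, so `∑ n x = |L| q` and `∑ n x ^ 2 ≤ |L| q + |L| ^ 2`.
Since there are `q ^ 2` points, the mean of `n` is `|L| / q` and its total squared deviation
is `∑ n x ^ 2 - |L| ^ 2 ≤ |L| q`. The deviation of `I(P, L)` from `|P| |L| / q` is the sum of
`n x - |L| / q` over `P`, and Cauchy–Schwarz bounds it by `√(|P| |L| q)`, so `C = 1` works.
-/

open Finset

theorem sum_sq_sub_eq {ι : Type*} (s : Finset ι) (f : ι → ℝ) (r : ℝ) :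
    ∑ i ∈ s, (f i - r) ^ 2 = ∑ i ∈ s, f i ^ 2 - 2 * r * ∑ i ∈ s, f i + #s * r ^ 2 := by
  simp only [sub_sq, sum_add_distrib, sum_sub_distrib, mul_sum, sum_const, nsmul_eq_mul]
  congr 2
  exact sum_congr rfl fun i _ => by ring

section IncidenceBound

open scoped Classical

variable {α : Type*}

noncomputable def pointDegree (L : Finset (Set α)) (x : α) : ℕ := #{l ∈ L | x ∈ l}

theorem card_incidences_eq_sum_pointDegree (L : Finset (Set α)) (P : Finset α) :
    #{x ∈ P ×ˢ L | x.1 ∈ x.2} = ∑ p ∈ P, pointDegree L p := by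
  rw [card_filter, sum_product]
  exact sum_congr rfl fun p _ => (card_filter _ _).symm

variable [Fintype α]

theorem sum_ite_mem_eq_ncard (s : Set α) : ∑ x, (if x ∈ s then 1 else 0) = s.ncard := by
  rw [← card_filter, ← Set.ncard_coe_finset, coe_filter]
  simp

variable {L : Finset (Set α)} {k : ℕ}

theorem sum_pointDegree (hL : ∀ l ∈ L, l.ncard = k) : ∑ x, pointDegree L x = #L * k := by
  simp only [pointDegree, card_filter]
  rw [sum_comm, ← smul_eq_mul, ← sum_const, ← sum_congr rfl hL]
  exact sum_congr rfl fun l _ => sum_ite_mem_eq_ncard l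

theorem sum_pointDegree_sq :
    ∑ x, pointDegree L x ^ 2 = ∑ l ∈ L, ∑ l' ∈ L, (l ∩ l').ncard := by
  simp only [pointDegree, card_filter, sq, sum_mul_sum, ← sum_ite_mem_eq_ncard, Set.mem_inter_iff,
    ite_zero_mul_ite_zero, mul_one]
  rw [sum_comm]
  exact sum_congr rfl fun l _ => sum_comm

theorem sum_pointDegree_sq_le (hL : ∀ l ∈ L, l.ncard = k)
    (hL' : ∀ l ∈ L, ∀ l' ∈ L, l ≠ l' → (l ∩ l').Subsingleton) :
    ∑ x, pointDegree L x ^ 2 ≤ #L * k + #L ^ 2 := by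
  have hpair : ∀ l ∈ L, ∀ l' ∈ L, (l ∩ l').ncard ≤ (if l = l' then k else 0) + 1 := by
    intro l hl l' hl'
    by_cases h : l = l'
    · subst h
      simp [hL l hl]
    · simpa [h] using Set.ncard_le_one_iff_subsingleton.2 (hL' l hl l' hl' h)
  calc ∑ x, pointDegree L x ^ 2
        ≤ ∑ l ∈ L, ∑ l' ∈ L, ((if l = l' then k else 0) + 1) := by
        rw [sum_pointDegree_sq]
        exact sum_le_sum fun l hl => sum_le_sum fun l' hl' => hpair l hl l' hl'
    _ = #L * k + #L ^ 2 := by simp [sum_add_distrib, sum_ite_eq, sq]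

theorem sum_sq_pointDegree_sub_le (hα : Fintype.card α = k ^ 2) (hL : ∀ l ∈ L, l.ncard = k)
    (hL' : ∀ l ∈ L, ∀ l' ∈ L, l ≠ l' → (l ∩ l').Subsingleton) :
    ∑ x, ((pointDegree L x : ℝ) - #L / k) ^ 2 ≤ #L * k := by
  rcases k.eq_zero_or_pos with rfl | hk
  · have : IsEmpty α := Fintype.card_eq_zero_iff.1 (by simpa using hα)
    simp
  have h1 : ∑ x, (pointDegree L x : ℝ) = #L * k := by exact_mod_cast sum_pointDegree hL
  have h2 : ∑ x, (pointDegree L x : ℝ) ^ 2 ≤ #L * k + #L ^ 2 := by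
    exact_mod_cast sum_pointDegree_sq_le hL hL'
  rw [sum_sq_sub_eq, h1, card_univ, hα]
  have hk' : (k : ℝ) ≠ 0 := by positivity
  field_simp
  push_cast
  nlinarith

theorem abs_card_incidences_sub_le (hα : Fintype.card α = k ^ 2) (hL : ∀ l ∈ L, l.ncard = k)
    (hL' : ∀ l ∈ L, ∀ l' ∈ L, l ≠ l' → (l ∩ l').Subsingleton) (P : Finset α) :
    |(#{x ∈ P ×ˢ L | x.1 ∈ x.2} : ℝ) - #P * #L / k| ≤ √(#P * #L * k) := by
  have hdev : (#{x ∈ P ×ˢ L | x.1 ∈ x.2} : ℝ) - #P * #L / k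
      = ∑ p ∈ P, ((pointDegree L p : ℝ) - #L / k) := by
    rw [card_incidences_eq_sum_pointDegree, sum_sub_distrib, sum_const, nsmul_eq_mul]
    push_cast
    ring
  rw [hdev]
  apply Real.abs_le_sqrt
  calc (∑ p ∈ P, ((pointDegree L p : ℝ) - #L / k)) ^ 2
      ≤ #P * ∑ p ∈ P, ((pointDegree L p : ℝ) - #L / k) ^ 2 := sq_sum_le_card_mul_sum_sq
    _ ≤ #P * ∑ x, ((pointDegree L x : ℝ) - #L / k) ^ 2 := by
      gcongr
      exact subset_univ P
    _ ≤ #P * (#L * k) := by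
      gcongr
      exact sum_sq_pointDegree_sub_le hα hL hL'
    _ = #P * #L * k := by ring

end IncidenceBound

section AffineLines

variable {F : Type*} [Field F] {a b c : F}

theorem mul_fst_add_mul_snd_eq_zero_iff (hab : (a, b) ≠ (0, 0)) (w : F × F) :
    a * w.1 + b * w.2 = 0 ↔ ∃ t : F, t • (-b, a) = w := by
  constructor
  · intro hw
    by_cases ha : a = 0
    · have hb : b ≠ 0 := fun hb => hab (by simp [ha, hb])
      have hw2 : w.2 = 0 := by simpa [ha, hb] using hw
      refine ⟨-w.1 / b, Prod.ext ?_ (by simp [ha, hw2])⟩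
      simp only [Prod.smul_fst, smul_eq_mul]
      field_simp
    · refine ⟨w.2 / a, Prod.ext ?_ ?_⟩ <;>
        simp only [Prod.smul_fst, Prod.smul_snd, smul_eq_mul]
      · field_simp
        linear_combination -hw
      · field_simp
  · rintro ⟨t, rfl⟩
    simp only [Prod.smul_fst, Prod.smul_snd, smul_eq_mul]
    ring

theorem exists_mul_fst_add_mul_snd_eq (hab : (a, b) ≠ (0, 0)) (c : F) :
    ∃ x : F × F, a * x.1 + b * x.2 = c := by
  by_cases ha : a = 0
  · have hb : b ≠ 0 := fun hb => hab (by simp [ha, hb])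
    exact ⟨(0, c / b), by field_simp; simp [ha]⟩
  · exact ⟨(c / a, 0), by field_simp; simp⟩

theorem line_eq_range (hab : (a, b) ≠ (0, 0)) {x : F × F} (hx : a * x.1 + b * x.2 = c) :
    {p : F × F | a * p.1 + b * p.2 = c} = Set.range fun t : F => x + t • (-b, a) := by
  ext p
  have hp : a * p.1 + b * p.2 = c ↔ a * (p - x).1 + b * (p - x).2 = 0 := by
    simp only [Prod.fst_sub, Prod.snd_sub]
    constructor
    · intro h
      linear_combination h - hx
    · intro h
      linear_combination h + hx
  simp only [Set.mem_ofPred_eq, Set.mem_range, hp, mul_fst_add_mul_snd_eq_zero_iff hab,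
    eq_sub_iff_add_eq']

theorem ncard_line (hab : (a, b) ≠ (0, 0)) (c : F) :
    {p : F × F | a * p.1 + b * p.2 = c}.ncard = Nat.card F := by
  obtain ⟨x, hx⟩ := exists_mul_fst_add_mul_snd_eq hab c
  have hd : ((-b, a) : F × F) ≠ 0 := fun h => hab (by simpa [Prod.ext_iff, and_comm] using h)
  rw [line_eq_range hab hx]
  exact Set.ncard_range_of_injective ((add_right_injective x).comp (smul_left_injective F hd))

theorem line_eq_range_sub (hab : (a, b) ≠ (0, 0)) {x y : F × F} (hx : a * x.1 + b * x.2 = c)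
    (hy : a * y.1 + b * y.2 = c) (hxy : x ≠ y) :
    {p : F × F | a * p.1 + b * p.2 = c} = Set.range fun t : F => x + t • (y - x) := by
  have hline := line_eq_range hab hx
  obtain ⟨s, hs⟩ : ∃ s : F, x + s • (-b, a) = y := by
    rw [← Set.mem_range, ← hline]
    exact hy
  have hs0 : s ≠ 0 := by
    rintro rfl
    exact hxy (by simpa using hs)
  rw [hline, ← (mul_left_surjective₀ hs0).range_comp]
  congr 1
  ext t : 1
  simp only [Function.comp_apply, ← hs, add_sub_cancel_left, smul_smul, mul_comm]

theorem line_inter_subsingleton {a' b' c' : F} (hab : (a, b) ≠ (0, 0))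
    (hab' : (a', b') ≠ (0, 0))
    (hne : {p : F × F | a * p.1 + b * p.2 = c} ≠ {p : F × F | a' * p.1 + b' * p.2 = c'}) :
    ({p : F × F | a * p.1 + b * p.2 = c} ∩
      {p : F × F | a' * p.1 + b' * p.2 = c'}).Subsingleton := by
  rintro x ⟨hx, hx'⟩ y ⟨hy, hy'⟩
  by_contra hxy
  exact hne ((line_eq_range_sub hab hx hy hxy).trans (line_eq_range_sub hab' hx' hy' hxy).symm)

end AffineLines

/-- There is an absolute constant `C > 0` such that for every finite
field `F_q`, every set `P` of points and every set `L` of lines in `F_q × F_q`, the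
number of incidences satisfies `|I(P,L) − |P||L|/q| ≤ C·√(|P||L|q)`. -/
theorem incidences_points_lines :
    ∃ C : ℝ, 0 < C ∧
      ∀ (F : Type) [Field F] [Fintype F]
        (P : Finset (F × F)) (L : Finset (Set (F × F))),
        (∀ l ∈ L, ∃ a b c : F, (a, b) ≠ (0, 0) ∧
          l = {p : F × F | a * p.1 + b * p.2 = c}) →
        |((@Finset.filter ((F × F) × Set (F × F)) (fun x => x.1 ∈ x.2)
              (Classical.decPred _) (P ×ˢ L)).card : ℝ)
            - (P.card : ℝ) * (L.card : ℝ) / (Fintype.card F : ℝ)|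
          ≤ C * Real.sqrt ((P.card : ℝ) * (L.card : ℝ) * (Fintype.card F : ℝ)) := by
  refine ⟨1, one_pos, fun F _ _ P L hL => ?_⟩
  rw [one_mul]
  have hcard : ∀ l ∈ L, l.ncard = Fintype.card F := by
    intro l hl
    obtain ⟨a, b, c, hab, rfl⟩ := hL l hl
    rw [ncard_line hab, Nat.card_eq_fintype_card]
  have hinter : ∀ l ∈ L, ∀ l' ∈ L, l ≠ l' → (l ∩ l').Subsingleton := by
    intro l hl l' hl'
    obtain ⟨a, b, c, hab, rfl⟩ := hL l hl
    obtain ⟨a', b', c', hab', rfl⟩ := hL l' hl'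
    exact line_inter_subsingleton hab hab'
  exact abs_card_incidences_sub_le (by rw [Fintype.card_prod, sq]) hcard hinter P
end

section
/- There exists an absolute constant c > 0 such that for every prime power q, all nonempty subsets A₁, A₂ ⊆ F_q^* and every nonempty subset A₃ ⊆ F_q, one has max(|A₁·A₂|, |A₁ + A₃|) ≥ c · min(√(|A₁|·q), √(|A₁|²·|A₂|·|A₃|/q)). -/
/-!
Count the solutions of `(s - a₃) * a₂ = p` with `a₂ ∈ A₂`, `s ∈ A₁ + A₃`, `a₃ ∈ A₃` and
`p ∈ A₁ * A₂`. Each triple `(a₁, a₂, a₃)` yields the solution `(a₂, a₁ + a₃, a₃, a₁ * a₂)`,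
so there are at least `|A₁| |A₂| |A₃|` of them. Detecting the equation with a primitive
additive character, the frequency `t = 0` contributes `|A₁ + A₃| |A₁ A₂| |A₂| |A₃| / q`,
while Cauchy–Schwarz and Parseval bound the other frequencies by
`√(q |A₁ + A₃| |A₁ A₂| |A₂| |A₃|)`. With `K = max (|A₁ A₂|, |A₁ + A₃|)` this gives
`q |A₁| ≤ K² + K √(q³ / (|A₂| |A₃|))`, and whichever term on the right dominates yields
the claim with `c = 1/2`.
-/

open Finset
open scoped Pointwise ComplexConjugate

namespace SumProduct

section CommRing

variable {R : Type*} [CommRing R]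

def expSum (ψ : AddChar R ℂ) (X : Finset R) (u : R) : ℂ := ∑ x ∈ X, ψ (u * x)

lemma expSum_zero (ψ : AddChar R ℂ) (X : Finset R) : expSum ψ X 0 = #X := by
  simp [expSum]

def subMulSolutions [DecidableEq R] (A₂ S A₃ P : Finset R) : Finset (R × R × R × R) :=
  {x ∈ A₂ ×ˢ S ×ˢ A₃ ×ˢ P | (x.2.1 - x.2.2.1) * x.1 = x.2.2.2}

lemma card_mul_card_mul_card_le_card_subMulSolutions [DecidableEq R] (A₁ A₂ A₃ : Finset R) :
    #A₁ * #A₂ * #A₃ ≤ #(subMulSolutions A₂ (A₁ + A₃) A₃ (A₁ * A₂)) := by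
  rw [← card_product, ← card_product]
  refine card_le_card_of_injOn (fun x => (x.1.2, x.1.1 + x.2, x.2, x.1.1 * x.1.2)) ?_ ?_
  · rintro ⟨⟨a₁, a₂⟩, a₃⟩ hx
    simp only [coe_product, Set.mem_prod, mem_coe] at hx
    simp only [subMulSolutions, coe_filter, mem_product, Set.mem_ofPred_eq]
    exact ⟨⟨hx.1.2, add_mem_add hx.1.1 hx.2, hx.2, mul_mem_mul hx.1.1 hx.1.2⟩, by ring⟩
  · rintro ⟨⟨a₁, a₂⟩, a₃⟩ - ⟨⟨b₁, b₂⟩, b₃⟩ - h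
    simp only [Prod.mk.injEq] at h
    obtain ⟨rfl, hsum, rfl, -⟩ := h
    rw [(add_left_inj _).mp hsum]

variable [Fintype R] {ψ : AddChar R ℂ}

lemma card_mul_card_filter_eq_sum [DecidableEq R] (hψ : ψ.IsPrimitive) {ι : Type*}
    (s : Finset ι) (f : ι → R) :
    (Fintype.card R : ℂ) * #{i ∈ s | f i = 0} = ∑ t, ∑ i ∈ s, ψ (t * f i) := by
  rw [sum_comm, card_filter, Nat.cast_sum, mul_sum]
  refine sum_congr rfl fun i _ => ?_
  rw [AddChar.sum_mulShift _ hψ]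
  split_ifs <;> simp

lemma sum_norm_expSum_sq (hψ : ψ.IsPrimitive) (X : Finset R) :
    ∑ u, ‖expSum ψ X u‖ ^ 2 = Fintype.card R * #X := by
  classical
  have hdiag : #{p ∈ X ×ˢ X | p.1 - p.2 = 0} = #X := by
    rw [← diag_card X, diag_eq_filter]
    simp only [sub_eq_zero]
  have hterm (u : R) : (‖expSum ψ X u‖ ^ 2 : ℂ) = ∑ p ∈ X ×ˢ X, ψ (u * (p.1 - p.2)) := by
    rw [← Complex.mul_conj', expSum, map_sum, sum_mul_sum, sum_product]
    refine sum_congr rfl fun x _ => sum_congr rfl fun y _ => ?_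
    rw [← AddChar.map_neg_eq_conj, ← AddChar.map_add_eq_mul, mul_sub, sub_eq_add_neg, mul_comm]
  have := card_mul_card_filter_eq_sum hψ (X ×ˢ X) fun p => p.1 - p.2
  rw [hdiag] at this
  exact_mod_cast (sum_congr rfl fun u _ => hterm u).trans this.symm

lemma card_mul_card_subMulSolutions_eq [DecidableEq R] (hψ : ψ.IsPrimitive)
    (A₂ S A₃ P : Finset R) :
    (Fintype.card R : ℂ) * #(subMulSolutions A₂ S A₃ P) =
      ∑ t, ∑ a₂ ∈ A₂, expSum ψ S (a₂ * t) * expSum ψ A₃ (-t * a₂) * expSum ψ P (-t) := by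
  have := card_mul_card_filter_eq_sum hψ (A₂ ×ˢ S ×ˢ A₃ ×ˢ P)
    fun x => (x.2.1 - x.2.2.1) * x.1 - x.2.2.2
  simp only [sub_eq_zero] at this
  rw [subMulSolutions, this]
  refine sum_congr rfl fun t _ => ?_
  simp only [sum_product]
  refine sum_congr rfl fun a₂ _ => ?_
  rw [expSum, expSum, sum_mul_sum, sum_mul]
  simp only [expSum, sum_mul_sum, ← AddChar.map_add_eq_mul]
  refine sum_congr rfl fun s _ => sum_congr rfl fun a₃ _ =>
    sum_congr rfl fun p _ => congrArg ψ (by ring)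

end CommRing

section Field

variable {F : Type*} [Field F] [Fintype F] {ψ : AddChar F ℂ}

lemma sum_norm_expSum_mul_sq_le (hψ : ψ.IsPrimitive) (X T : Finset F) {c : F} (hc : c ≠ 0) :
    ∑ t ∈ T, ‖expSum ψ X (c * t)‖ ^ 2 ≤ Fintype.card F * #X := by
  classical
  calc ∑ t ∈ T, ‖expSum ψ X (c * t)‖ ^ 2 = ∑ u ∈ T.image (c * ·), ‖expSum ψ X u‖ ^ 2 :=
        (sum_image (f := fun u => ‖expSum ψ X u‖ ^ 2)
          fun _ _ _ _ h => mul_left_cancel₀ hc h).symm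
    _ ≤ ∑ u, ‖expSum ψ X u‖ ^ 2 := sum_le_univ_sum_of_nonneg fun _ => by positivity
    _ = Fintype.card F * #X := sum_norm_expSum_sq hψ X

lemma norm_sum_expSum_erase_zero_le [DecidableEq F] (hψ : ψ.IsPrimitive) (A₂ S A₃ P : Finset F)
    (hA₂ : (0 : F) ∉ A₂) :
    ‖∑ t ∈ univ.erase 0, ∑ a₂ ∈ A₂,
        expSum ψ S (a₂ * t) * expSum ψ A₃ (-t * a₂) * expSum ψ P (-t)‖ ≤
      √((Fintype.card F : ℝ) ^ 3 * (#S * #P * (#A₂ * #A₃))) := by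
  set q : ℝ := (Fintype.card F : ℝ)
  set T := univ.erase (0 : F) ×ˢ A₂
  have hS : ∑ x ∈ T, ‖expSum ψ S (x.2 * x.1)‖ ^ 2 ≤ #A₂ * (q * #S) := by
    rw [sum_product_right, ← nsmul_eq_mul, ← sum_const]
    exact sum_le_sum fun a₂ ha₂ =>
      sum_norm_expSum_mul_sq_le hψ S _ (ne_of_mem_of_not_mem ha₂ hA₂)
  have hA₃P : ∑ x ∈ T, ‖expSum ψ A₃ (-x.1 * x.2) * expSum ψ P (-x.1)‖ ^ 2 ≤
      q * #A₃ * (q * #P) := by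
    calc ∑ x ∈ T, ‖expSum ψ A₃ (-x.1 * x.2) * expSum ψ P (-x.1)‖ ^ 2
        = ∑ t ∈ univ.erase 0, (∑ a₂ ∈ A₂, ‖expSum ψ A₃ (-t * a₂)‖ ^ 2) *
            ‖expSum ψ P (-1 * t)‖ ^ 2 := by
          simp only [T, sum_product, norm_mul, mul_pow, sum_mul, neg_one_mul]
      _ ≤ ∑ t ∈ univ.erase 0, q * #A₃ * ‖expSum ψ P (-1 * t)‖ ^ 2 :=
          sum_le_sum fun t ht => mul_le_mul_of_nonneg_right
            (sum_norm_expSum_mul_sq_le hψ A₃ A₂ (neg_ne_zero.2 (ne_of_mem_erase ht)))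
            (by positivity)
      _ ≤ q * #A₃ * (q * #P) := by
          rw [← mul_sum]
          exact mul_le_mul_of_nonneg_left
            (sum_norm_expSum_mul_sq_le hψ P _ (neg_ne_zero.2 one_ne_zero)) (by positivity)
  calc _ ≤ ∑ x ∈ T, ‖expSum ψ S (x.2 * x.1)‖ *
          ‖expSum ψ A₃ (-x.1 * x.2) * expSum ψ P (-x.1)‖ := by
        rw [sum_product]
        refine (norm_sum_le _ _).trans (sum_le_sum fun t _ => (norm_sum_le _ _).trans_eq ?_)
        simp only [mul_assoc, norm_mul]
    _ ≤ √((∑ x ∈ T, ‖expSum ψ S (x.2 * x.1)‖ ^ 2) *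
          ∑ x ∈ T, ‖expSum ψ A₃ (-x.1 * x.2) * expSum ψ P (-x.1)‖ ^ 2) :=
        Real.le_sqrt_of_sq_le (sum_mul_sq_le_sq_mul_sq _ _ _)
    _ ≤ √(q ^ 3 * (#S * #P * (#A₂ * #A₃))) := by
        refine Real.sqrt_le_sqrt ((mul_le_mul hS hA₃P (by positivity) (by positivity)).trans_eq ?_)
        ring

lemma card_mul_card_subMulSolutions_le [DecidableEq F] (hψ : ψ.IsPrimitive)
    (A₂ S A₃ P : Finset F) (hA₂ : (0 : F) ∉ A₂) :
    (Fintype.card F : ℝ) * #(subMulSolutions A₂ S A₃ P) ≤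
      #S * #P * (#A₂ * #A₃) + √((Fintype.card F : ℝ) ^ 3 * (#S * #P * (#A₂ * #A₃))) := by
  have herror :
      ((Fintype.card F * #(subMulSolutions A₂ S A₃ P) - #S * #P * (#A₂ * #A₃) : ℝ) : ℂ) =
        ∑ t ∈ univ.erase 0, ∑ a₂ ∈ A₂,
          expSum ψ S (a₂ * t) * expSum ψ A₃ (-t * a₂) * expSum ψ P (-t) := by
    push_cast
    rw [card_mul_card_subMulSolutions_eq hψ, ← add_sum_erase _ _ (mem_univ 0)]
    simp only [mul_zero, neg_zero, zero_mul, expSum_zero, sum_const, nsmul_eq_mul]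
    ring
  have := norm_sum_expSum_erase_zero_le hψ A₂ S A₃ P hA₂
  rw [← herror, Complex.norm_real, Real.norm_eq_abs] at this
  exact sub_le_iff_le_add'.1 ((le_abs_self _).trans this)

end Field

lemma min_sqrt_le_two_mul {a b d q y K : ℝ} (hb : 0 < b) (hd : 0 < d) (hq : 0 < q)
    (hK : 0 ≤ K) (hy : y ≤ K ^ 2)
    (h : q * (a * b * d) ≤ y * (b * d) + √(q ^ 3 * (y * (b * d)))) :
    min √(a * q) √(a ^ 2 * b * d / q) ≤ 2 * K := by
  by_contra! hlt
  rw [lt_min_iff, Real.lt_sqrt (by linarith), Real.lt_sqrt (by linarith),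
    lt_div_iff₀ hq] at hlt
  obtain ⟨h₁, h₂⟩ := hlt
  have ha : 0 < a := pos_of_mul_pos_left ((sq_nonneg _).trans_lt h₁) hq.le
  have hmain : y * (b * d) < q * (a * b * d) / 4 := by
    nlinarith [mul_lt_mul_of_pos_right h₁ (by positivity : 0 < b * d),
      mul_le_mul_of_nonneg_right hy (by positivity : 0 ≤ b * d)]
  have herror : √(q ^ 3 * (y * (b * d))) < q * (a * b * d) / 2 := by
    rw [Real.sqrt_lt' (by positivity)]
    nlinarith [mul_lt_mul_of_pos_right h₂ (by positivity : 0 < q ^ 2 * (b * d)),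
      mul_le_mul_of_nonneg_right hy (by positivity : 0 ≤ q ^ 3 * (b * d))]
  nlinarith

end SumProduct

open SumProduct in
/-- **Garaev.** There is an absolute `c > 0` such that for every finite
field `F_q`, nonempty `A₁, A₂ ⊆ F_q^*` and nonempty `A₃ ⊆ F_q`,
`max(|A₁·A₂|, |A₁+A₃|) ≥ c·min(√(|A₁|q), √(|A₁|²|A₂||A₃|/q))`. -/
theorem sum_product_garaev :
    ∃ c : ℝ, 0 < c ∧
      ∀ (F : Type) [Field F] [Fintype F] [DecidableEq F] (A₁ A₂ A₃ : Finset F),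
        A₁.Nonempty → A₂.Nonempty → A₃.Nonempty →
        (0 : F) ∉ A₁ → (0 : F) ∉ A₂ →
        c * min (Real.sqrt ((A₁.card : ℝ) * (Fintype.card F : ℝ)))
            (Real.sqrt ((A₁.card : ℝ) ^ 2 * (A₂.card : ℝ) * (A₃.card : ℝ)
              / (Fintype.card F : ℝ)))
          ≤ max (((A₁ * A₂).card : ℝ)) (((A₁ + A₃).card : ℝ)) := by
  refine ⟨1 / 2, by norm_num, fun F _ _ _ A₁ A₂ A₃ _ h₂ h₃ _ h₂0 => ?_⟩
  have hψ := AddChar.FiniteField.primitiveChar_to_Complex_isPrimitive F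
  have hsol : (#A₁ * #A₂ * #A₃ : ℝ) ≤ #(subMulSolutions A₂ (A₁ + A₃) A₃ (A₁ * A₂)) :=
    mod_cast card_mul_card_mul_card_le_card_subMulSolutions A₁ A₂ A₃
  have hy : (#(A₁ + A₃) : ℝ) * #(A₁ * A₂) ≤ (max (#(A₁ * A₂) : ℝ) #(A₁ + A₃)) ^ 2 := by
    rw [sq]
    exact mul_le_mul (le_max_right _ _) (le_max_left _ _) (by positivity) (by positivity)
  have := min_sqrt_le_two_mul (by simpa using h₂) (by simpa using h₃)
    (mod_cast Fintype.card_pos) (by positivity) hy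
    ((mul_le_mul_of_nonneg_left hsol (by positivity)).trans
      (card_mul_card_subMulSolutions_le hψ A₂ (A₁ + A₃) A₃ (A₁ * A₂) h₂0))
  linarith
end

section
/- There exists an absolute constant c > 0 such that for every prime power q and all nonempty subsets A₁, A₂, A₃ ⊆ F_q^*, one has max(|(A₁ + 1)·A₂|, |A₁·A₃|) ≥ c · min(√(|A₁|·q), √(|A₁|²·|A₂|·|A₃|/q)), where A₁ + 1 = {a + 1 : a ∈ A₁}. -/
/-!
Count the solutions of `x * y - z * w = 1` with `x ∈ X := (A₁ + 1) * A₂`, `z ∈ Z := A₁ * A₃`,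
`y ∈ A₂⁻¹`, `w ∈ A₃⁻¹`. Every `(a, b, c) ∈ A₁ × A₂ × A₃` yields the solution
`((a + 1) * b, a * c, b⁻¹, c⁻¹)`, so there are at least `|A₁||A₂||A₃|` of them. On the other hand,
for fixed `(x, z)` the solutions `(y, w)` are the points of `A₂⁻¹ × A₃⁻¹` on a line, and Vinh's
incidence bound (Cauchy–Schwarz, using that two distinct points lie on at most one line) caps the
count by `|X||Z||A₂||A₃|/q + √(q|X||Z||A₂||A₃|)`. Comparing the two bounds gives
`|X||Z| ≥ min(|A₁|q, |A₁|²|A₂||A₃|/q) / 4`, and `max(|X|, |Z|) ≥ √(|X||Z|)`.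
-/

open scoped Pointwise
open Finset

section LineIncidences

variable {F : Type*} [Field F] [Fintype F] [DecidableEq F]

/-- `ℓ = (m, b)` encodes the non-vertical line `w = m * y + b`; points are `t = (y, w)`. -/
def lineIncidences (P : Finset (F × F)) (ℓ : F × F) : ℕ :=
  #{t ∈ P | t.2 = ℓ.1 * t.1 + ℓ.2}

lemma card_lines_through (t : F × F) :
    #{ℓ : F × F | t.2 = ℓ.1 * t.1 + ℓ.2} = Fintype.card F := by
  have : ({ℓ : F × F | t.2 = ℓ.1 * t.1 + ℓ.2} : Finset (F × F))
      = univ.image fun m => (m, t.2 - m * t.1) := by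
    ext ℓ
    simp only [mem_filter, mem_univ, true_and, mem_image, Prod.ext_iff]
    constructor
    · intro h
      exact ⟨ℓ.1, rfl, by rw [h]; ring⟩
    · rintro ⟨m, rfl, h⟩
      rw [← h]
      ring
  rw [this, card_image_of_injective _ fun m m' h => (Prod.ext_iff.mp h).1, card_univ]

lemma card_lines_through_pair_le_one {t t' : F × F} (h : t ≠ t') :
    #{ℓ : F × F | t.2 = ℓ.1 * t.1 + ℓ.2 ∧ t'.2 = ℓ.1 * t'.1 + ℓ.2} ≤ 1 := by
  refine card_le_one.mpr fun ℓ hℓ ℓ' hℓ' => ?_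
  simp only [mem_filter, mem_univ, true_and] at hℓ hℓ'
  have hx : t'.1 - t.1 ≠ 0 := by
    intro hx
    refine h (Prod.ext (sub_eq_zero.mp hx).symm ?_)
    linear_combination hℓ.1 - hℓ.2 - ℓ.1 * hx
  have hm : ℓ.1 = ℓ'.1 :=
    mul_right_cancel₀ hx (by linear_combination hℓ.1 - hℓ.2 - hℓ'.1 + hℓ'.2)
  exact Prod.ext hm (by linear_combination hℓ'.1 - hℓ.1 - t.1 * hm)

lemma sum_lineIncidences (P : Finset (F × F)) :
    ∑ ℓ, lineIncidences P ℓ = #P * Fintype.card F := by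
  have hdouble := sum_card_bipartiteAbove_eq_sum_card_bipartiteBelow (s := P) (t := univ)
    (r := fun (t : F × F) (ℓ : F × F) => t.2 = ℓ.1 * t.1 + ℓ.2)
  simp only [bipartiteAbove, bipartiteBelow, card_lines_through, sum_const, smul_eq_mul]
    at hdouble
  exact hdouble.symm

lemma sum_sq_lineIncidences (P : Finset (F × F)) :
    ∑ ℓ, lineIncidences P ℓ ^ 2 ≤ #P * (Fintype.card F + #P) := by
  have hsq : ∀ ℓ : F × F, lineIncidences P ℓ ^ 2
      = #{u ∈ P ×ˢ P | u.1.2 = ℓ.1 * u.1.1 + ℓ.2 ∧ u.2.2 = ℓ.1 * u.2.1 + ℓ.2} := by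
    intro ℓ
    rw [lineIncidences, sq, ← card_product, ← filter_product]
  have hpair : ∀ u : (F × F) × (F × F),
      #{ℓ : F × F | u.1.2 = ℓ.1 * u.1.1 + ℓ.2 ∧ u.2.2 = ℓ.1 * u.2.1 + ℓ.2}
        ≤ (if u.1 = u.2 then Fintype.card F else 0) + 1 := by
    rintro ⟨t, t'⟩
    by_cases h : t = t'
    · subst h
      simp [card_lines_through]
    · simpa [h] using card_lines_through_pair_le_one h
  have hdouble := sum_card_bipartiteAbove_eq_sum_card_bipartiteBelow (s := P ×ˢ P) (t := univ)
    (r := fun u (ℓ : F × F) => u.1.2 = ℓ.1 * u.1.1 + ℓ.2 ∧ u.2.2 = ℓ.1 * u.2.1 + ℓ.2)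
  simp only [bipartiteAbove, bipartiteBelow] at hdouble
  calc ∑ ℓ, lineIncidences P ℓ ^ 2
      = ∑ u ∈ P ×ˢ P, #{ℓ : F × F | u.1.2 = ℓ.1 * u.1.1 + ℓ.2 ∧ u.2.2 = ℓ.1 * u.2.1 + ℓ.2} := by
        simp only [hsq, hdouble]
    _ ≤ ∑ u ∈ P ×ˢ P, ((if u.1 = u.2 then Fintype.card F else 0) + 1) :=
        sum_le_sum fun u _ => hpair u
    _ = #P * (Fintype.card F + #P) := by
        rw [sum_add_distrib, sum_product, ← card_eq_sum_ones, card_product]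
        simp [sum_ite_eq]
        ring

lemma sum_sq_sub_mean_lineIncidences_le (P : Finset (F × F)) :
    ∑ ℓ, ((lineIncidences P ℓ : ℝ) - #P / Fintype.card F) ^ 2 ≤ Fintype.card F * #P := by
  set q : ℝ := (Fintype.card F : ℝ)
  have hq : 0 < q := Nat.cast_pos.mpr Fintype.card_pos
  have hsum : ∑ ℓ, (lineIncidences P ℓ : ℝ) = #P * q := by
    simp only [q]; exact_mod_cast sum_lineIncidences P
  have hsq : ∑ ℓ, (lineIncidences P ℓ : ℝ) ^ 2 ≤ #P * (q + #P) := by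
    simp only [q]; exact_mod_cast sum_sq_lineIncidences P
  calc ∑ ℓ, ((lineIncidences P ℓ : ℝ) - #P / q) ^ 2
      = ∑ ℓ, (lineIncidences P ℓ : ℝ) ^ 2 - 2 * (#P / q) * ∑ ℓ, (lineIncidences P ℓ : ℝ)
          + q ^ 2 * (#P / q) ^ 2 := by
        simp only [sub_sq, sum_add_distrib, sum_sub_distrib, ← sum_mul, ← mul_sum, sum_const,
          card_univ, Fintype.card_prod, nsmul_eq_mul]
        push_cast
        ring
    _ ≤ q * #P := by
        rw [hsum]
        field_simp
        nlinarith

lemma sum_lineIncidences_le (P L : Finset (F × F)) :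
    ∑ ℓ ∈ L, (lineIncidences P ℓ : ℝ)
      ≤ #L * #P / Fintype.card F + √(Fintype.card F * (#L * #P)) := by
  set μ : ℝ := #P / Fintype.card F
  have hdev : (∑ ℓ ∈ L, ((lineIncidences P ℓ : ℝ) - μ)) ^ 2
      ≤ Fintype.card F * (#L * #P) :=
    calc (∑ ℓ ∈ L, ((lineIncidences P ℓ : ℝ) - μ)) ^ 2
        ≤ #L * ∑ ℓ ∈ L, ((lineIncidences P ℓ : ℝ) - μ) ^ 2 := sq_sum_le_card_mul_sum_sq
      _ ≤ #L * (Fintype.card F * #P) := by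
          gcongr
          exact (sum_le_sum_of_subset_of_nonneg (subset_univ L) fun _ _ _ => sq_nonneg _).trans
            (sum_sq_sub_mean_lineIncidences_le P)
      _ = Fintype.card F * (#L * #P) := by ring
  have := (le_abs_self _).trans (Real.abs_le_sqrt hdev)
  rw [sum_sub_distrib, sum_const, nsmul_eq_mul] at this
  linarith [show (#L : ℝ) * μ = #L * #P / Fintype.card F by ring]

end LineIncidences

section DeterminantOne

variable {F : Type*} [Field F] [Fintype F] [DecidableEq F]

def detOneQuadruples (X Z Y W : Finset F) : Finset ((F × F) × F × F) :=
  {p ∈ (X ×ˢ Z) ×ˢ (Y ×ˢ W) | p.1.1 * p.2.1 - p.1.2 * p.2.2 = 1}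

/-- For `z ≠ 0`, `x * y - z * w = 1` says that `(y, w)` lies on the line `w = (x / z) * y - 1 / z`,
and distinct `(x, z)` give distinct lines. -/
lemma card_detOneQuadruples_le (X Z Y W : Finset F) (hZ : 0 ∉ Z) :
    (#(detOneQuadruples X Z Y W) : ℝ) ≤ #X * #Z * (#Y * #W) / Fintype.card F
      + √(Fintype.card F * (#X * #Z * (#Y * #W))) := by
  set φ : F × F → F × F := fun u => (u.1 / u.2, -u.2⁻¹)
  have hne : ∀ u ∈ X ×ˢ Z, u.2 ≠ 0 := fun u hu h => hZ (h ▸ (mem_product.mp hu).2)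
  have hinj : Set.InjOn φ (X ×ˢ Z : Finset (F × F)) := by
    intro u hu v hv huv
    obtain ⟨h₁, h₂⟩ := Prod.ext_iff.mp huv
    have hz : u.2 = v.2 := inv_injective (neg_injective h₂)
    have hx : u.1 / u.2 = v.1 / v.2 := h₁
    rw [hz] at hx
    exact Prod.ext ((div_left_inj' (hne v hv)).mp hx) hz
  have hfiber : ∀ u ∈ X ×ˢ Z,
      #{v ∈ Y ×ˢ W | u.1 * v.1 - u.2 * v.2 = 1} = lineIncidences (Y ×ˢ W) (φ u) := by
    intro u hu
    refine congrArg card (filter_congr fun v _ => ?_)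
    have := hne u hu
    simp only [φ]
    constructor <;> intro h
    · field_simp
      linear_combination -h
    · field_simp at h
      linear_combination -h
  have hcount : #(detOneQuadruples X Z Y W)
      = ∑ ℓ ∈ (X ×ˢ Z).image φ, lineIncidences (Y ×ˢ W) ℓ := by
    rw [sum_image hinj, detOneQuadruples, card_filter, sum_product]
    exact sum_congr rfl fun u hu => (card_filter _ _).symm.trans (hfiber u hu)
  have := sum_lineIncidences_le (Y ×ˢ W) ((X ×ˢ Z).image φ)
  rw [card_image_of_injOn hinj, card_product, card_product] at this
  rw [hcount]
  push_cast at this ⊢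
  exact this

omit [Fintype F] in
lemma card_mul_card_mul_card_le_card_detOneQuadruples (A B C : Finset F) (hB : 0 ∉ B)
    (hC : 0 ∉ C) :
    #A * (#B * #C)
      ≤ #(detOneQuadruples (A.image (· + 1) * B) (A * C) (B.image (·⁻¹)) (C.image (·⁻¹))) := by
  rw [← card_product, ← card_product]
  refine card_le_card_of_injOn (fun t => (((t.1 + 1) * t.2.1, t.1 * t.2.2), (t.2.1⁻¹, t.2.2⁻¹)))
    ?_ ?_
  · rintro ⟨a, b, c⟩ ht
    simp only [coe_product, Set.mem_prod, mem_coe] at ht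
    obtain ⟨ha, hb, hc⟩ := ht
    have hb0 : b ≠ 0 := ne_of_mem_of_not_mem hb hB
    have hc0 : c ≠ 0 := ne_of_mem_of_not_mem hc hC
    simp only [detOneQuadruples, coe_filter, mem_product, Set.mem_ofPred_eq]
    refine ⟨⟨⟨mul_mem_mul (mem_image_of_mem _ ha) hb, mul_mem_mul ha hc⟩,
      mem_image_of_mem _ hb, mem_image_of_mem _ hc⟩, ?_⟩
    field_simp
    ring
  · rintro ⟨a, b, c⟩ ht ⟨a', b', c'⟩ - heq
    simp only [coe_product, Set.mem_prod, mem_coe] at ht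
    simp only [Prod.mk.injEq] at heq
    obtain ⟨⟨-, hac⟩, hb, hc⟩ := heq
    obtain rfl := inv_injective hb
    obtain rfl := inv_injective hc
    obtain rfl := mul_right_cancel₀ (ne_of_mem_of_not_mem ht.2.2 hC) hac
    rfl

end DeterminantOne

lemma min_le_four_mul_of_le_add_sqrt {a K q R : ℝ} (ha : 0 ≤ a) (hK : 0 ≤ K) (hq : 0 < q)
    (hR : 0 ≤ R) (h : a * K ≤ R * K / q + √(q * (R * K))) :
    min (a * q) (a ^ 2 * K / q) ≤ 4 * R := by
  rcases hK.eq_or_lt with rfl | hK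
  · exact (min_le_right _ _).trans (by simpa using hR)
  by_cases hmain : a * K ≤ 2 * (R * K / q)
  · refine (min_le_left _ _).trans ?_
    rw [mul_div_assoc', le_div_iff₀ hq] at hmain
    nlinarith
  · refine (min_le_right _ _).trans ?_
    have hlt : a * K / 2 < √(q * (R * K)) := by linarith
    rw [Real.lt_sqrt (by positivity)] at hlt
    rw [div_le_iff₀ hq]
    nlinarith

lemma half_mul_min_sqrt_le_max {x y r s : ℝ} (hr : 0 ≤ r) (hs : 0 ≤ s)
    (h : min x y ≤ 4 * (r * s)) : 1 / 2 * min √x √y ≤ max r s := by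
  rw [← Real.sqrt_monotone.map_min]
  have hmax : r * s ≤ max r s ^ 2 := by
    rw [sq]
    exact mul_le_mul (le_max_left _ _) (le_max_right _ _) hs (hr.trans (le_max_left _ _))
  calc 1 / 2 * √(min x y) = √(min x y / 4) := by
        rw [Real.sqrt_div' _ (by norm_num : (0:ℝ) ≤ 4), show (4:ℝ) = 2 ^ 2 by norm_num,
          Real.sqrt_sq (by norm_num)]
        ring
    _ ≤ √(max r s ^ 2) := Real.sqrt_le_sqrt (by linarith)
    _ = max r s := Real.sqrt_sq (hr.trans (le_max_left _ _))

/-- **Garaev–Shen.** There is an absolute `c > 0` such that for every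
finite field `F_q` and nonempty `A₁, A₂, A₃ ⊆ F_q^*`,
`max(|(A₁+1)·A₂|, |A₁·A₃|) ≥ c·min(√(|A₁|q), √(|A₁|²|A₂||A₃|/q))`. -/
theorem sum_product_garaev_shen :
    ∃ c : ℝ, 0 < c ∧
      ∀ (F : Type) [Field F] [Fintype F] [DecidableEq F] (A₁ A₂ A₃ : Finset F),
        A₁.Nonempty → A₂.Nonempty → A₃.Nonempty →
        (0 : F) ∉ A₁ → (0 : F) ∉ A₂ → (0 : F) ∉ A₃ →
        c * min (Real.sqrt ((A₁.card : ℝ) * (Fintype.card F : ℝ)))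
            (Real.sqrt ((A₁.card : ℝ) ^ 2 * (A₂.card : ℝ) * (A₃.card : ℝ)
              / (Fintype.card F : ℝ)))
          ≤ max (((A₁.image (· + 1) * A₂).card : ℝ)) (((A₁ * A₃).card : ℝ)) := by
  refine ⟨1 / 2, by norm_num, fun F _ _ _ A₁ A₂ A₃ _ _ _ h₁ h₂ h₃ => ?_⟩
  have h₁₃ : (0 : F) ∉ A₁ * A₃ := by
    simp only [mem_mul, not_exists, not_and]
    exact fun a ha c hc => mul_ne_zero (ne_of_mem_of_not_mem ha h₁) (ne_of_mem_of_not_mem hc h₃)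
  set X := A₁.image (· + 1) * A₂
  set Z := A₁ * A₃
  have hcount : (#A₁ : ℝ) * (#A₂ * #A₃) ≤ #X * #Z * (#A₂ * #A₃) / Fintype.card F
      + √(Fintype.card F * (#X * #Z * (#A₂ * #A₃))) := by
    have hlower := card_mul_card_mul_card_le_card_detOneQuadruples A₁ A₂ A₃ h₂ h₃
    have hupper := card_detOneQuadruples_le X Z (A₂.image (·⁻¹)) (A₃.image (·⁻¹)) h₁₃
    rw [card_image_of_injective _ inv_injective, card_image_of_injective _ inv_injective]
      at hupper
    exact le_trans (by exact_mod_cast hlower) hupper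
  have hXZ := min_le_four_mul_of_le_add_sqrt (by positivity) (by positivity)
    (Nat.cast_pos.mpr Fintype.card_pos) (by positivity) hcount
  rw [← mul_assoc] at hXZ
  exact half_mul_min_sqrt_le_max (by positivity) (by positivity) hXZ
end

section
/- Let q be an odd prime power. For each x ∈ F_q let X(x) and Y(x) be subsets of F_q, and put T = (Σ_{x ∈ F_q} |X(x)|) · (Σ_{y ∈ F_q} |Y(y)|). Then the number S of quadruples (x, y, x′, y′) ∈ F_q⁴ with x′ ∈ X(x), y′ ∈ Y(y) and x′ + y′ = (x + y)² satisfies |S − T/q| ≤ √(q·T). -/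
/-!
With `A = ∑ |X x|` and `B = ∑ |Y y|`, write `S = ∑_{(x, x') ∈ F²} 1[x' ∈ X x] · N(x, x')`, where
`N(x, x')` counts the `y` with `(x + y)² - x' ∈ Y y` (then `y'` is forced). `N` has sum `q B` and
second moment at most `q B + B²`: for `y ≠ y'` the map `(x, x') ↦ ((x + y)² - x', (x + y')² - x')`
is a bijection of `F²`, since `(x + y)² - (x + y')² = (y - y') (2x + y + y')` is injective in `x`
for odd `q`. Cauchy–Schwarz of the indicator against `N - B / q` then gives
`(S - A B / q)² ≤ A · q B`.
-/

open Finset Function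

lemma sq_sum_mul_sub_sum_mul_sum_div_card_le {ι : Type*} (s : Finset ι) (f g : ι → ℝ) :
    (∑ i ∈ s, f i * g i - (∑ i ∈ s, f i) * (∑ i ∈ s, g i) / #s) ^ 2 ≤
      (∑ i ∈ s, f i ^ 2) * (∑ i ∈ s, g i ^ 2 - (∑ i ∈ s, g i) ^ 2 / #s) := by
  rcases s.eq_empty_or_nonempty with rfl | hs
  · simp
  set m := (∑ i ∈ s, g i) / #s with hm
  have hn : (#s : ℝ) ≠ 0 := by exact_mod_cast hs.card_pos.ne'
  have hcenter : ∑ i ∈ s, f i * g i - (∑ i ∈ s, f i) * (∑ i ∈ s, g i) / #s =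
      ∑ i ∈ s, f i * (g i - m) := by
    simp only [mul_sub, sum_sub_distrib, ← sum_mul, hm]
    ring
  have hvar : ∑ i ∈ s, g i ^ 2 - (∑ i ∈ s, g i) ^ 2 / #s = ∑ i ∈ s, (g i - m) ^ 2 := by
    simp only [sub_sq, sum_add_distrib, sum_sub_distrib, ← sum_mul, ← mul_sum, sum_const,
      nsmul_eq_mul, hm]
    field_simp
    ring
  rw [hcenter, hvar]
  exact sum_mul_sq_le_sq_mul_sq s f fun i => g i - m

section
variable {α G : Type*} [Fintype α] [AddCommGroup G] [Fintype G] [DecidableEq G]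

lemma card_filter_sub_mem (p : α → G) (s : Finset G) :
    #{z : α × G | p z.1 - z.2 ∈ s} = Fintype.card α * #s := by
  have he : Bijective fun z : α × G => (z.1, p z.1 - z.2) :=
    Finite.injective_iff_bijective.mp fun z w h => by
      simp only [Prod.mk.injEq] at h
      obtain ⟨h1, h2⟩ := h
      ext
      · exact h1
      · rw [h1] at h2; exact sub_right_injective h2
  rw [card_bijective _ he (t := univ ×ˢ s) (by simp), card_product, card_univ]

lemma card_filter_sub_mem_and_sub_mem {p r : G → G} (h : Injective (p - r)) (s t : Finset G) :
    #{z : G × G | p z.1 - z.2 ∈ s ∧ r z.1 - z.2 ∈ t} = #s * #t := by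
  have he : Bijective fun z : G × G => (p z.1 - z.2, r z.1 - z.2) :=
    Finite.injective_iff_bijective.mp fun z w hzw => by
      simp only [Prod.mk.injEq] at hzw
      obtain ⟨h1, h2⟩ := hzw
      have hz1 : z.1 = w.1 := h (by simpa using congrArg₂ (· - ·) h1 h2)
      ext
      · exact hz1
      · rw [hz1] at h1; exact sub_right_injective h1
  rw [card_bijective _ he (t := s ×ˢ t) (by simp), card_product]
end

section
variable {F : Type*} [Field F]

lemma injective_sq_add_sub_sq_add (h2 : (2 : F) ≠ 0) {y y' : F} (hy : y ≠ y') :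
    Injective ((fun x : F => (x + y) ^ 2) - fun x => (x + y') ^ 2) := fun a b hab => by
  have : (2 * (y - y')) * (a - b) = 0 := by
    simp only [Pi.sub_apply] at hab
    linear_combination hab
  exact sub_eq_zero.mp ((mul_eq_zero.mp this).resolve_left
    (mul_ne_zero h2 (sub_ne_zero.mpr hy)))
end

section
variable {F : Type*} [Field F] [Fintype F] [DecidableEq F]

def partnerCount (Y : F → Finset F) (z : F × F) : ℕ := #{y | (z.1 + y) ^ 2 - z.2 ∈ Y y}

lemma card_square_quadruples_eq_sum (X Y : F → Finset F) :
    #{t : F × F × F × F | t.2.2.1 ∈ X t.1 ∧ t.2.2.2 ∈ Y t.2.1 ∧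
        t.2.2.1 + t.2.2.2 = (t.1 + t.2.1) ^ 2} =
      ∑ z : F × F, (if z.2 ∈ X z.1 then 1 else 0) * partnerCount Y z := by
  simp only [card_filter, partnerCount, Fintype.sum_prod_type, mul_sum]
  refine sum_congr rfl fun x _ => ?_
  rw [sum_comm]
  refine sum_congr rfl fun x' _ => sum_congr rfl fun y _ => ?_
  have hy' : ∀ y' : F, x' + y' = (x + y) ^ 2 ↔ y' = (x + y) ^ 2 - x' := fun y' => by
    constructor <;> intro h <;> linear_combination h
  simp only [hy', and_comm (b := _ = _), ite_and, sum_ite_irrel, sum_ite_eq', mem_univ, if_true,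
    sum_const_zero, mul_ite, mul_one, mul_zero]
  split_ifs <;> rfl

lemma sum_partnerCount (Y : F → Finset F) :
    ∑ z, partnerCount Y z = Fintype.card F * ∑ y, #(Y y) := by
  simp only [partnerCount, card_filter]
  rw [sum_comm, mul_sum]
  refine sum_congr rfl fun y _ => ?_
  rw [← card_filter, card_filter_sub_mem (fun x => (x + y) ^ 2)]

lemma sum_partnerCount_sq_le (h2 : (2 : F) ≠ 0) (Y : F → Finset F) :
    ∑ z, partnerCount Y z ^ 2 ≤ Fintype.card F * ∑ y, #(Y y) + (∑ y, #(Y y)) ^ 2 := by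
  have hsq : ∀ z, partnerCount Y z ^ 2 = ∑ y, ∑ y',
      if (z.1 + y) ^ 2 - z.2 ∈ Y y ∧ (z.1 + y') ^ 2 - z.2 ∈ Y y' then 1 else 0 := fun z => by
    simp only [partnerCount, card_filter, sq, sum_mul_sum, ite_zero_mul_ite_zero, mul_one]
  have hpair : ∀ y y', #{z : F × F | (z.1 + y) ^ 2 - z.2 ∈ Y y ∧ (z.1 + y') ^ 2 - z.2 ∈ Y y'}
      ≤ (if y = y' then Fintype.card F * #(Y y) else 0) + #(Y y) * #(Y y') := fun y y' => by
    rcases eq_or_ne y y' with rfl | hy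
    · simp only [and_self, if_true, card_filter_sub_mem (fun x => (x + y) ^ 2)]
      omega
    · rw [card_filter_sub_mem_and_sub_mem (injective_sq_add_sub_sq_add h2 hy), if_neg hy,
        zero_add]
  calc ∑ z, partnerCount Y z ^ 2
      = ∑ y, ∑ y', #{z : F × F | (z.1 + y) ^ 2 - z.2 ∈ Y y ∧ (z.1 + y') ^ 2 - z.2 ∈ Y y'} := by
        simp only [hsq, card_filter]
        rw [sum_comm]
        exact sum_congr rfl fun _ _ => sum_comm
    _ ≤ ∑ y, ∑ y', ((if y = y' then Fintype.card F * #(Y y) else 0) + #(Y y) * #(Y y')) :=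
        sum_le_sum fun y _ => sum_le_sum fun y' _ => hpair y y'
    _ = Fintype.card F * ∑ y, #(Y y) + (∑ y, #(Y y)) ^ 2 := by
        simp only [sum_add_distrib, sum_ite_eq, mem_univ, if_true, ← mul_sum, sq, sum_mul_sum]
end

/-- Let `q` be an odd prime power. For each `x ∈ F_q` let
`X(x), Y(x) ⊆ F_q`, and put `T = (Σ_x |X(x)|)·(Σ_y |Y(y)|)`. Then the number `S` of
quadruples `(x,y,x',y')` with `x' ∈ X(x)`, `y' ∈ Y(y)`, `x' + y' = (x+y)²` satisfies
`|S − T/q| ≤ √(q·T)`. -/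
theorem solutions_square_equation {F : Type*} [Field F] [Fintype F] [DecidableEq F]
    (hodd : Odd (Fintype.card F)) (X Y : F → Finset F) :
    |((Finset.univ.filter (fun t : F × F × F × F =>
          t.2.2.1 ∈ X t.1 ∧ t.2.2.2 ∈ Y t.2.1 ∧
            t.2.2.1 + t.2.2.2 = (t.1 + t.2.1) ^ 2)).card : ℝ)
        - ((∑ x : F, ((X x).card : ℝ)) * (∑ y : F, ((Y y).card : ℝ)))
          / (Fintype.card F : ℝ)|
      ≤ Real.sqrt ((Fintype.card F : ℝ)
          * ((∑ x : F, ((X x).card : ℝ)) * (∑ y : F, ((Y y).card : ℝ)))) := by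
  have h2 : (2 : F) ≠ 0 := Ring.two_ne_zero fun hchar =>
    Nat.not_even_iff_odd.mpr hodd (Nat.even_iff.mpr (FiniteField.even_card_iff_char_two.mp hchar))
  set q : ℝ := (Fintype.card F : ℝ)
  set A := ∑ x : F, ((X x).card : ℝ)
  set B := ∑ y : F, ((Y y).card : ℝ)
  set f : F × F → ℝ := fun z => if z.2 ∈ X z.1 then 1 else 0
  set g : F × F → ℝ := fun z => partnerCount Y z
  have hS : (#{t : F × F × F × F | t.2.2.1 ∈ X t.1 ∧ t.2.2.2 ∈ Y t.2.1 ∧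
      t.2.2.1 + t.2.2.2 = (t.1 + t.2.1) ^ 2} : ℝ) = ∑ z, f z * g z := by
    rw [card_square_quadruples_eq_sum]; push_cast; rfl
  have hf : ∑ z, f z = A := by rw [Fintype.sum_prod_type]; simp [f, A]
  have hf2 : ∑ z, f z ^ 2 = A := by simp [f, ← hf]
  have hg : ∑ z, g z = q * B := by simp only [g, q, B]; exact_mod_cast sum_partnerCount Y
  have hg2 : ∑ z, g z ^ 2 ≤ q * B + B ^ 2 := by
    simp only [g, q, B]; exact_mod_cast sum_partnerCount_sq_le h2 Y
  have hq : 0 < q := by simp only [q]; exact_mod_cast Fintype.card_pos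
  have hcard : (#(univ : Finset (F × F)) : ℝ) = q ^ 2 := by simp [q, sq]
  have hcov := sq_sum_mul_sub_sum_mul_sum_div_card_le univ f g
  rw [hS]
  clear_value q A B f g
  rw [hf, hf2, hg, hcard] at hcov
  have hA : 0 ≤ A := hf2 ▸ sum_nonneg fun _ _ => sq_nonneg _
  apply Real.abs_le_sqrt
  calc (_ - A * B / q) ^ 2 = (∑ z, f z * g z - A * (q * B) / q ^ 2) ^ 2 := by
        field_simp
    _ ≤ A * (∑ z, g z ^ 2 - (q * B) ^ 2 / q ^ 2) := hcov
    _ ≤ A * (q * B) := by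
        gcongr
        field_simp; linarith
    _ = q * (A * B) := by ring
end

section
/- Let q be an odd prime power and let A₁, A₂, A₃, A₄ be subsets of F_q. Then the number S of quadruples (x₁, x₂, x₃, x₄) ∈ A₁ × A₂ × A₃ × A₄ with x₁ + x₂ = (x₃ + x₄)² satisfies |S − |A₁||A₂||A₃||A₄|/q| ≤ √(q·|A₁||A₂||A₃||A₄|). -/
/-!
Expand the indicator of `x₁ + x₂ - (x₃ + x₄)² = 0` in additive characters. The trivial
character contributes `|A₁||A₂||A₃||A₄|/q`; for a nontrivial `ψ` the term factors as
`Â₁(ψ) Â₂(ψ) T(ψ)` with `T(ψ) = ∑ ψ(-(x₃ + x₄)²)`. Completing the square makes the shifted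
quadratic phases `x ↦ ψ(-(x + y)²)` orthogonal in `y` (this needs `2 ≠ 0`), so Cauchy–Schwarz gives
`|T(ψ)| ≤ √(q|A₃||A₄|)`, and Cauchy–Schwarz with Parseval gives
`∑ |Â₁(ψ)||Â₂(ψ)| ≤ q √(|A₁||A₂|)`.
-/

open Finset ComplexConjugate

lemma sum_norm_sq_sum_eq_of_orthogonal {ι α : Type*} [Fintype ι] [DecidableEq α]
    (f : ι → α → ℂ) (c : ℝ)
    (hf : ∀ x y, ∑ i, f i x * conj (f i y) = if x = y then (c : ℂ) else 0) (A : Finset α) :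
    ∑ i, ‖∑ x ∈ A, f i x‖ ^ 2 = c * #A := by
  apply Complex.ofReal_injective
  push_cast
  calc ∑ i, ((‖∑ x ∈ A, f i x‖ : ℂ)) ^ 2 = ∑ x ∈ A, ∑ y ∈ A, ∑ i, f i x * conj (f i y) := by
        simp_rw [← Complex.mul_conj', map_sum, sum_mul_sum]
        rw [sum_comm]
        exact sum_congr rfl fun _ _ => sum_comm
    _ = c * #A := by simp [hf, mul_comm]

namespace AddChar

section Group

variable {G : Type*} [AddCommGroup G] [Fintype G] [DecidableEq G]

lemma sum_norm_sq_sum (A : Finset G) :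
    ∑ ψ : AddChar G ℂ, ‖∑ x ∈ A, ψ x‖ ^ 2 = Fintype.card G * #A := by
  refine sum_norm_sq_sum_eq_of_orthogonal (fun (ψ : AddChar G ℂ) x => ψ x) (Fintype.card G)
    (fun x y => ?_) A
  simp_rw [← map_neg_eq_conj, ← map_add_eq_mul, ← sub_eq_add_neg, sum_apply_eq_ite, sub_eq_zero,
    Complex.ofReal_natCast]

lemma card_filter_eq_eq {ι : Type*} (s : Finset ι) (f g : ι → G) :
    (#{t ∈ s | f t = g t} : ℂ)
      = (Fintype.card G : ℂ)⁻¹ * ∑ ψ : AddChar G ℂ, ∑ t ∈ s, ψ (f t - g t) := by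
  have hG : (Fintype.card G : ℂ) ≠ 0 := Nat.cast_ne_zero.2 Fintype.card_ne_zero
  rw [sum_comm, mul_sum, card_filter]
  push_cast
  refine sum_congr rfl fun t _ => ?_
  simp_rw [sum_apply_eq_ite, sub_eq_zero]
  split_ifs <;> simp [hG]

lemma card_filter_eq_eq_sub_card_div {ι : Type*} (s : Finset ι) (f g : ι → G) :
    (#{t ∈ s | f t = g t} : ℂ) - #s / Fintype.card G
      = (Fintype.card G : ℂ)⁻¹ * ∑ ψ ∈ univ.erase (0 : AddChar G ℂ), ∑ t ∈ s, ψ (f t - g t) := by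
  rw [card_filter_eq_eq, ← add_sum_erase _ _ (mem_univ 0)]
  simp only [zero_apply, sum_const, nsmul_eq_mul, mul_one]
  ring

lemma norm_sum_erase_zero_mul_le (A B : Finset G) (c : AddChar G ℂ → ℂ) {M : ℝ} (hM : 0 ≤ M)
    (hc : ∀ ψ ≠ 0, ‖c ψ‖ ≤ M) :
    ‖∑ ψ ∈ univ.erase (0 : AddChar G ℂ), (∑ x ∈ A, ψ x) * (∑ x ∈ B, ψ x) * c ψ‖
      ≤ Fintype.card G * √(#A * #B) * M := by
  calc ‖∑ ψ ∈ univ.erase (0 : AddChar G ℂ), (∑ x ∈ A, ψ x) * (∑ x ∈ B, ψ x) * c ψ‖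
      ≤ ∑ ψ ∈ univ.erase (0 : AddChar G ℂ), ‖∑ x ∈ A, ψ x‖ * ‖∑ x ∈ B, ψ x‖ * M := by
        refine (norm_sum_le _ _).trans (sum_le_sum fun ψ hψ => ?_)
        rw [norm_mul, norm_mul]
        gcongr
        exact hc ψ (ne_of_mem_erase hψ)
    _ ≤ (∑ ψ : AddChar G ℂ, ‖∑ x ∈ A, ψ x‖ * ‖∑ x ∈ B, ψ x‖) * M := by
        rw [sum_mul]
        exact sum_le_sum_of_subset_of_nonneg (erase_subset _ _) fun _ _ _ => by positivity
    _ ≤ (√(∑ ψ : AddChar G ℂ, ‖∑ x ∈ A, ψ x‖ ^ 2)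
          * √(∑ ψ : AddChar G ℂ, ‖∑ x ∈ B, ψ x‖ ^ 2)) * M := by
        gcongr
        exact Real.sum_mul_le_sqrt_mul_sqrt _ _ _
    _ = Fintype.card G * √(#A * #B) * M := by
        rw [sum_norm_sq_sum, sum_norm_sq_sum, ← Real.sqrt_mul (by positivity),
          show (Fintype.card G : ℝ) * #A * (Fintype.card G * #B)
            = Fintype.card G ^ 2 * (#A * #B) by ring,
          Real.sqrt_mul (by positivity), Real.sqrt_sq (by positivity)]

end Group

lemma sum_add_mul_eq_zero {F : Type*} [Field F] [Fintype F] {ψ : AddChar F ℂ} (hψ : ψ ≠ 0)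
    (b : F) {a : F} (ha : a ≠ 0) :
    ∑ y, ψ (b + a * y) = 0 := by
  rw [← sum_eq_zero_iff_ne_zero.2 hψ]
  exact Fintype.sum_equiv ((Equiv.mulLeft₀ a ha).trans (Equiv.addLeft b)) _ _ fun _ => rfl

lemma sum_add_sub_sq_eq_mul {R : Type*} [CommRing R] (ψ : AddChar R ℂ)
    (A₁ A₂ A₃ A₄ : Finset R) :
    ∑ t ∈ A₁ ×ˢ A₂ ×ˢ A₃ ×ˢ A₄, ψ (t.1 + t.2.1 - (t.2.2.1 + t.2.2.2) ^ 2)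
      = (∑ x ∈ A₁, ψ x) * (∑ x ∈ A₂, ψ x) * ∑ x ∈ A₃, ∑ y ∈ A₄, ψ (-(x + y) ^ 2) := by
  simp only [sum_product]
  rw [sum_mul_sum, sum_mul]
  refine sum_congr rfl fun x _ => ?_
  rw [sum_mul]
  refine sum_congr rfl fun y _ => ?_
  simp only [mul_sum, sub_eq_add_neg, map_add_eq_mul]

section Field

variable {F : Type*} [Field F] [Fintype F] [DecidableEq F]

lemma sum_norm_sq_sum_neg_sq (h2 : (2 : F) ≠ 0) {ψ : AddChar F ℂ} (hψ : ψ ≠ 0)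
    (A : Finset F) :
    ∑ y, ‖∑ x ∈ A, ψ (-(x + y) ^ 2)‖ ^ 2 = Fintype.card F * #A := by
  refine sum_norm_sq_sum_eq_of_orthogonal (fun y x => ψ (-(x + y) ^ 2)) (Fintype.card F)
    (fun x x' => ?_) A
  simp_rw [← map_neg_eq_conj, neg_neg, ← map_add_eq_mul]
  split_ifs with hx
  · simp [hx]
  · -- completing the square: the phase is affine in `y`, with nonzero slope
    have hsq : ∀ y, -(x + y) ^ 2 + (x' + y) ^ 2 = (x' ^ 2 - x ^ 2) + 2 * (x' - x) * y :=
      fun y => by ring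
    simp_rw [hsq]
    exact sum_add_mul_eq_zero hψ _ (mul_ne_zero h2 (sub_ne_zero.2 (Ne.symm hx)))

lemma norm_sum_sum_neg_sq_le (h2 : (2 : F) ≠ 0) {ψ : AddChar F ℂ} (hψ : ψ ≠ 0)
    (A B : Finset F) :
    ‖∑ x ∈ A, ∑ y ∈ B, ψ (-(x + y) ^ 2)‖ ≤ √(Fintype.card F * #A * #B) := by
  rw [sum_comm]
  calc ‖∑ y ∈ B, ∑ x ∈ A, ψ (-(x + y) ^ 2)‖
      ≤ ∑ y ∈ B, 1 * ‖∑ x ∈ A, ψ (-(x + y) ^ 2)‖ := by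
        simpa only [one_mul] using norm_sum_le _ _
    _ ≤ √(∑ y ∈ B, 1 ^ 2) * √(∑ y ∈ B, ‖∑ x ∈ A, ψ (-(x + y) ^ 2)‖ ^ 2) :=
        Real.sum_mul_le_sqrt_mul_sqrt _ _ _
    _ ≤ √(#B) * √(∑ y, ‖∑ x ∈ A, ψ (-(x + y) ^ 2)‖ ^ 2) := by
        gcongr
        · simp
        · exact subset_univ B
    _ = √(Fintype.card F * #A * #B) := by
        rw [sum_norm_sq_sum_neg_sq h2 hψ, ← Real.sqrt_mul (by positivity), mul_comm]

end Field

end AddChar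

/-- Let `q` be an odd prime power and `A₁, A₂, A₃, A₄ ⊆ F_q`. The
number `S` of quadruples `(x₁,x₂,x₃,x₄) ∈ A₁ × A₂ × A₃ × A₄` with
`x₁ + x₂ = (x₃ + x₄)²` satisfies `|S − |A₁||A₂||A₃||A₄|/q| ≤ √(q·|A₁||A₂||A₃||A₄|)`. -/
theorem solutions_sum_eq_square {F : Type*} [Field F] [Fintype F] [DecidableEq F]
    (hodd : Odd (Fintype.card F)) (A₁ A₂ A₃ A₄ : Finset F) :
    |(((A₁ ×ˢ A₂ ×ˢ A₃ ×ˢ A₄).filter (fun t : F × F × F × F =>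
          t.1 + t.2.1 = (t.2.2.1 + t.2.2.2) ^ 2)).card : ℝ)
        - (A₁.card : ℝ) * A₂.card * A₃.card * A₄.card / (Fintype.card F : ℝ)|
      ≤ Real.sqrt ((Fintype.card F : ℝ)
          * ((A₁.card : ℝ) * A₂.card * A₃.card * A₄.card)) := by
  have h2 : (2 : F) ≠ 0 := Ring.two_ne_zero fun h => by
    have := FiniteField.even_card_iff_char_two.1 h
    rw [Nat.odd_iff] at hodd
    omega
  have hcard : (#A₁ : ℂ) * #A₂ * #A₃ * #A₄ = #(A₁ ×ˢ A₂ ×ˢ A₃ ×ˢ A₄) := by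
    simp only [card_product, Nat.cast_mul, mul_assoc]
  rw [← Real.norm_eq_abs, ← Complex.norm_real]
  push_cast
  rw [hcard, AddChar.card_filter_eq_eq_sub_card_div (A₁ ×ˢ A₂ ×ˢ A₃ ×ˢ A₄) (fun t => t.1 + t.2.1)
    (fun t => (t.2.2.1 + t.2.2.2) ^ 2)]
  simp_rw [AddChar.sum_add_sub_sq_eq_mul, norm_mul, norm_inv, Complex.norm_natCast]
  have hq : (0 : ℝ) < Fintype.card F := Nat.cast_pos.2 Fintype.card_pos
  calc (Fintype.card F : ℝ)⁻¹ * ‖_‖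
      ≤ (Fintype.card F : ℝ)⁻¹
          * (Fintype.card F * √(#A₁ * #A₂) * √(Fintype.card F * #A₃ * #A₄)) := by
        gcongr
        exact AddChar.norm_sum_erase_zero_mul_le _ _ _ (Real.sqrt_nonneg _) fun ψ hψ =>
          AddChar.norm_sum_sum_neg_sq_le h2 hψ A₃ A₄
    _ = √(Fintype.card F * (#A₁ * #A₂ * #A₃ * #A₄)) := by
        rw [← mul_assoc, inv_mul_cancel_left₀ hq.ne', ← Real.sqrt_mul (by positivity)]
        ring_nf
end

section
/- Let q be an odd prime power and let X₁, X₂ be subsets of F_q with |X₁|·|X₂| > 2q. Then there exist x, y ∈ F_q such that x + y ∈ X₁ and x·y ∈ X₂. -/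
/-!
The pair `x + y = s`, `x * y = p` is solvable iff `s² - 4p` is a square. If it is a nonsquare
for all `s ∈ X₁`, `p ∈ X₂`, then `∑ χ (s² - 4p) = -|X₁||X₂|` for the quadratic character `χ`.
On the other hand Cauchy–Schwarz over `s`, together with the near-orthogonality
`∑ₜ χ ((t - a)(t - b)) = -1` for `a ≠ b`, bounds the square of that sum by `2q|X₁||X₂|`.
-/

open Finset

section QuadraticCharSums

variable {F : Type*} [Field F] [Fintype F] [DecidableEq F]

theorem quadraticChar_le_one (t : F) : quadraticChar F t ≤ 1 := by
  rcases quadraticChar_isQuadratic F t with h | h | h <;> rw [h] <;> decide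

/-- Write `x (x + a) = x² (1 + a / x)` and substitute `y = a / x`; the term `x = 0` is where the
two sides differ. -/
theorem quadraticChar_sum_mul_add_self {a : F} (hF : ringChar F ≠ 2) (ha : a ≠ 0) :
    ∑ x : F, quadraticChar F (x * (x + a)) = -1 := by
  have hpoint (x : F) : quadraticChar F (x * (x + a)) =
      quadraticChar F (1 + a / x) - if x = 0 then 1 else 0 := by
    by_cases hx : x = 0
    · simp [hx]
    · rw [if_neg hx, sub_zero, show x * (x + a) = x ^ 2 * (1 + a / x) by field_simp,
        map_mul, quadraticChar_sq_one' hx, one_mul]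
  have hinv : Function.Involutive (a / · : F → F) := fun _ => div_div_cancel₀ ha
  have hshift : ∑ x : F, quadraticChar F (1 + a / x) = 0 := by
    rw [Fintype.sum_equiv (hinv.toPerm _) (fun x => quadraticChar F (1 + a / x))
        (fun y => quadraticChar F (1 + y)) fun _ => rfl,
      Fintype.sum_equiv (Equiv.addLeft 1) (fun y => quadraticChar F (1 + y)) _ fun _ => rfl,
      quadraticChar_sum_zero hF]
  rw [sum_congr rfl fun x _ => hpoint x, sum_sub_distrib, hshift, sum_ite_eq']
  simp

theorem quadraticChar_sum_sub_mul_sub (hF : ringChar F ≠ 2) (a b : F) :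
    ∑ t : F, quadraticChar F ((t - a) * (t - b)) =
      if a = b then (Fintype.card F : ℤ) - 1 else -1 := by
  rw [Fintype.sum_equiv (Equiv.subRight a) _ (fun u => quadraticChar F (u * (u + (a - b))))
    fun t => by simp only [Equiv.subRight_apply]; ring_nf]
  split_ifs with hab
  · have hpoint (u : F) : quadraticChar F (u * u) = 1 - if u = 0 then 1 else 0 := by
      by_cases hu : u = 0
      · simp [hu]
      · rw [if_neg hu, ← sq, quadraticChar_sq_one' hu, sub_zero]
    simp [hab, hpoint, sum_sub_distrib]
  · exact quadraticChar_sum_mul_add_self hF (sub_ne_zero.mpr hab)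

/-- Each `t` has exactly `χ t + 1` square roots. -/
theorem sum_comp_sq_eq_sum_quadraticChar_add_one_mul (hF : ringChar F ≠ 2) (f : F → ℤ) :
    ∑ s : F, f (s ^ 2) = ∑ t : F, (quadraticChar F t + 1) * f t := by
  rw [← sum_fiberwise' univ (· ^ 2) f]
  refine sum_congr rfl fun t _ => ?_
  rw [sum_const, nsmul_eq_mul, ← quadraticChar_card_sqrts hF t]
  simp

theorem sum_sq_sum_quadraticChar_sub (hF : ringChar F ≠ 2) (A : Finset F) :
    ∑ t : F, (∑ a ∈ A, quadraticChar F (t - a)) ^ 2 = #A * (Fintype.card F - #A : ℤ) := by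
  calc ∑ t : F, (∑ a ∈ A, quadraticChar F (t - a)) ^ 2
      = ∑ a ∈ A, ∑ b ∈ A, ∑ t : F, quadraticChar F ((t - a) * (t - b)) := by
        simp_rw [sq, sum_mul_sum, ← map_mul]
        rw [sum_comm]
        exact sum_congr rfl fun _ _ => sum_comm
    _ = ∑ a ∈ A, ∑ b ∈ A, ((if a = b then (Fintype.card F : ℤ) else 0) - 1) := by
        simp_rw [quadraticChar_sum_sub_mul_sub hF]
        congr! 2 with a _ b _
        split_ifs <;> ring
    _ = #A * (Fintype.card F - #A : ℤ) := by
        simp [sum_sub_distrib, sum_ite_eq, mul_sub]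

/-- Cauchy–Schwarz over `s ∈ S`, then enlarging to all `s ∈ F`; substituting `t = s²` costs the
factor `χ t + 1 ≤ 2`. -/
theorem sq_sum_sum_quadraticChar_sq_sub_le (hF : ringChar F ≠ 2) (S A : Finset F) :
    (∑ s ∈ S, ∑ a ∈ A, quadraticChar F (s ^ 2 - a)) ^ 2 ≤ 2 * Fintype.card F * #S * #A := by
  set g : F → ℤ := fun t => ∑ a ∈ A, quadraticChar F (t - a)
  have hmoment : ∑ t : F, g t ^ 2 ≤ #A * Fintype.card F := by
    rw [sum_sq_sum_quadraticChar_sub hF]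
    nlinarith [Int.natCast_nonneg #A]
  calc (∑ s ∈ S, g (s ^ 2)) ^ 2
      ≤ #S * ∑ s ∈ S, g (s ^ 2) ^ 2 := sq_sum_le_card_mul_sum_sq
    _ ≤ #S * ∑ s : F, g (s ^ 2) ^ 2 := by
        gcongr
        exact subset_univ S
    _ = #S * ∑ t : F, (quadraticChar F t + 1) * g t ^ 2 := by
        rw [sum_comp_sq_eq_sum_quadraticChar_add_one_mul hF fun t => g t ^ 2]
    _ ≤ #S * ∑ t : F, 2 * g t ^ 2 := by
        gcongr with t
        linarith [quadraticChar_le_one t]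
    _ ≤ 2 * Fintype.card F * #S * #A := by
        rw [← mul_sum]
        nlinarith [Int.natCast_nonneg #S]

theorem exists_isSquare_sq_sub_of_card_mul_card_gt (hF : ringChar F ≠ 2) (S A : Finset F)
    (h : 2 * Fintype.card F < #S * #A) : ∃ s ∈ S, ∃ a ∈ A, IsSquare (s ^ 2 - a) := by
  by_contra! hnot
  have hsum : ∑ s ∈ S, ∑ a ∈ A, quadraticChar F (s ^ 2 - a) = -(#S * #A) := by
    rw [sum_congr rfl fun s hs => sum_congr rfl fun a ha =>
      quadraticChar_neg_one_iff_not_isSquare.mpr (hnot s hs a ha)]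
    simp
  have hbound := sq_sum_sum_quadraticChar_sq_sub_le hF S A
  rw [hsum] at hbound
  have h' : (2 * Fintype.card F : ℤ) < #S * #A := by exact_mod_cast h
  nlinarith

end QuadraticCharSums

theorem exists_add_eq_mul_eq_of_isSquare {K : Type*} [Field K] (h2 : (2 : K) ≠ 0) {s p : K}
    (h : IsSquare (s ^ 2 - 4 * p)) : ∃ x y, x + y = s ∧ x * y = p := by
  obtain ⟨z, hz⟩ := h
  refine ⟨(s + z) / 2, (s - z) / 2, by field_simp; ring, ?_⟩
  field_simp
  linear_combination hz

/-- **Shkredov-type.** Let `q` be an odd prime power and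
`X₁, X₂ ⊆ F_q` with `|X₁|·|X₂| > 2q`. Then there exist `x, y ∈ F_q` with
`x + y ∈ X₁` and `x·y ∈ X₂`. -/
theorem sum_in_product_in {F : Type*} [Field F] [Fintype F] [DecidableEq F]
    (hodd : Odd (Fintype.card F)) (X₁ X₂ : Finset F)
    (h : 2 * Fintype.card F < X₁.card * X₂.card) :
    ∃ x y : F, x + y ∈ X₁ ∧ x * y ∈ X₂ := by
  have hF : ringChar F ≠ 2 := fun h2 => by
    have := FiniteField.even_card_of_char_two h2
    grind
  have h2 : (2 : F) ≠ 0 := Ring.two_ne_zero hF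
  have h4 : (4 : F) ≠ 0 := by
    rw [show (4 : F) = 2 * 2 by norm_num]
    exact mul_ne_zero h2 h2
  have hcard : #(X₂.image (4 * ·)) = #X₂ := card_image_of_injective _ (mul_right_injective₀ h4)
  obtain ⟨s, hs, _, ha, hsq⟩ :=
    exists_isSquare_sq_sub_of_card_mul_card_gt hF X₁ (X₂.image (4 * ·)) (hcard ▸ h)
  obtain ⟨p, hp, rfl⟩ := mem_image.mp ha
  obtain ⟨x, y, rfl, rfl⟩ := exists_add_eq_mul_eq_of_isSquare h2 hsq
  exact ⟨x, y, hs, hp⟩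
end

section
/- Let q be a prime power. For each x ∈ F_q^* let X(x) and Y(x) be subsets of F_q, and put T = (Σ_{x ∈ F_q^*} |X(x)|) · (Σ_{y ∈ F_q^*} |Y(y)|). Then the number S of quadruples (x, y, x′, y′) with x, y ∈ F_q^*, x′ ∈ X(x), y′ ∈ Y(y) and x′ + y′ = x·y satisfies |S − T/q| ≤ 2·√(q·T). -/
/-!
Read `(x, x')` as a point of `F²` and `(y, y')` as the line `x' = y x - y'`. Then `S` counts
incidences between the point set `P = {(x, x') : x' ∈ X x}` and the line set
`L = {(y, y') : y' ∈ Y y}`, and `T = |P| |L|`. Write `S - T/q = ∑_{p ∈ P} D p` with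
`D p = ∑_{ℓ ∈ L} (1[p ∈ ℓ] - 1/q)`; Cauchy–Schwarz over `P` gives
`(S - T/q)² ≤ |P| ∑_{p ∈ F²} D p ²`. In the expansion of `∑ D²`, two lines of different slopes
meet in exactly one point and contribute `0`, distinct parallel lines contribute `-1`, and each
line contributes `q - 1`, so `∑ D² ≤ q |L|` and `|S - T/q| ≤ √(q T)`.
-/

open Finset

section UnitsGraph

variable {M : Type*} [Monoid M] [Fintype Mˣ]

def unitsGraph (X : Mˣ → Finset M) : Finset (M × M) :=
  (univ.sigma X).map ⟨fun p => ((p.1 : M), p.2), by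
    rintro ⟨u, x⟩ ⟨v, y⟩ h
    simp only [Prod.mk.injEq, Units.val_inj] at h
    obtain ⟨rfl, rfl⟩ := h
    rfl⟩

lemma card_unitsGraph (X : Mˣ → Finset M) : #(unitsGraph X) = ∑ x, #(X x) := by
  simp [unitsGraph, card_sigma]

lemma mem_unitsGraph {X : Mˣ → Finset M} {p : M × M} :
    p ∈ unitsGraph X ↔ ∃ u : Mˣ, (u : M) = p.1 ∧ p.2 ∈ X u := by
  simp only [unitsGraph, mem_map, mem_sigma, mem_univ, true_and, Sigma.exists]
  constructor
  · rintro ⟨u, x', hx', rfl⟩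
    exact ⟨u, rfl, hx'⟩
  · rintro ⟨u, hu, hx⟩
    exact ⟨u, p.2, hx, Prod.ext hu rfl⟩

end UnitsGraph

lemma card_filter_units_eq_card_incidences {R : Type*} [Semiring R] [Fintype R] [DecidableEq R]
    (X Y : Rˣ → Finset R) :
    #{t : Rˣ × Rˣ × R × R | t.2.2.1 ∈ X t.1 ∧ t.2.2.2 ∈ Y t.2.1 ∧
        t.2.2.1 + t.2.2.2 = (t.1 : R) * (t.2.1 : R)}
      = #{x ∈ unitsGraph X ×ˢ unitsGraph Y | x.1.2 + x.2.2 = x.1.1 * x.2.1} := by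
  refine card_bij (fun t _ => (((t.1 : R), t.2.2.1), ((t.2.1 : R), t.2.2.2))) ?_ ?_ ?_
  · intro t ht
    simp only [mem_filter, mem_univ, true_and] at ht
    simp only [mem_filter, mem_product, mem_unitsGraph]
    exact ⟨⟨⟨t.1, rfl, ht.1⟩, ⟨t.2.1, rfl, ht.2.1⟩⟩, ht.2.2⟩
  · intro t _ t' _ h
    simp only [Prod.mk.injEq, Units.val_inj] at h
    ext <;> simp [h]
  · rintro ⟨⟨x, x'⟩, ⟨y, y'⟩⟩ h
    simp only [mem_filter, mem_product, mem_unitsGraph] at h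
    obtain ⟨⟨⟨u, rfl, hx⟩, ⟨v, rfl, hy⟩⟩, hxy⟩ := h
    exact ⟨(u, v, x', y'), by simp [hx, hy, hxy], rfl⟩

section Incidence

variable {F : Type*} [Field F] [Fintype F] [DecidableEq F]

noncomputable def incidenceDefect (Q : Finset (F × F)) (p : F × F) : ℝ :=
  ∑ l ∈ Q, ((if p.2 + l.2 = p.1 * l.1 then 1 else 0) - (Fintype.card F : ℝ)⁻¹)

lemma sum_boole_incident (l : F × F) :
    ∑ p : F × F, (if p.2 + l.2 = p.1 * l.1 then (1 : ℝ) else 0) = Fintype.card F := by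
  rw [Fintype.sum_prod_type]
  simp [← eq_sub_iff_add_eq]

lemma sum_boole_incident_and (l l' : F × F) :
    ∑ p : F × F, (if p.2 + l.2 = p.1 * l.1 ∧ p.2 + l'.2 = p.1 * l'.1 then (1 : ℝ) else 0)
      = if l.1 = l'.1 then (if l.2 = l'.2 then (Fintype.card F : ℝ) else 0) else 1 := by
  rw [Fintype.sum_prod_type]
  simp only [← eq_sub_iff_add_eq, ite_and, sum_ite_eq', mem_univ, if_true]
  obtain ⟨m, c⟩ := l
  obtain ⟨m', c'⟩ := l'
  by_cases hm : m = m'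
  · subst hm
    simp
  · have hsolve : ∀ x : F, x * m - c = x * m' - c' ↔ x = (c - c') / (m - m') := fun x => by
      rw [eq_div_iff (sub_ne_zero.mpr hm)]
      constructor <;> intro h <;> linear_combination h
    simp [hsolve, hm]

lemma sum_incident_sub_inv_mul (l l' : F × F) :
    ∑ p : F × F, ((if p.2 + l.2 = p.1 * l.1 then (1 : ℝ) else 0) - (Fintype.card F : ℝ)⁻¹)
        * ((if p.2 + l'.2 = p.1 * l'.1 then 1 else 0) - (Fintype.card F : ℝ)⁻¹)
      = if l.1 = l'.1 then (if l.2 = l'.2 then (Fintype.card F : ℝ) else 0) - 1 else 0 := by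
  have hq : (Fintype.card F : ℝ) ≠ 0 := by positivity
  simp only [sub_mul, mul_sub, ite_zero_mul_ite_zero, mul_one, sum_sub_distrib, ← sum_mul,
    ← mul_sum, sum_boole_incident, sum_boole_incident_and, sum_const, card_univ,
    Fintype.card_prod, nsmul_eq_mul]
  push_cast
  field_simp
  split_ifs <;> ring

lemma sum_sq_incidenceDefect_le (Q : Finset (F × F)) :
    ∑ p : F × F, incidenceDefect Q p ^ 2 ≤ Fintype.card F * #Q := by
  calc ∑ p : F × F, incidenceDefect Q p ^ 2
      = ∑ l ∈ Q, ∑ l' ∈ Q, ∑ p : F × F,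
          ((if p.2 + l.2 = p.1 * l.1 then (1 : ℝ) else 0) - (Fintype.card F : ℝ)⁻¹)
            * ((if p.2 + l'.2 = p.1 * l'.1 then 1 else 0) - (Fintype.card F : ℝ)⁻¹) := by
        simp only [incidenceDefect, sq, sum_mul_sum]
        rw [sum_comm]
        exact sum_congr rfl fun _ _ => sum_comm
    _ ≤ ∑ l ∈ Q, ∑ l' ∈ Q, if l = l' then (Fintype.card F : ℝ) else 0 := by
        gcongr with l _ l' _
        rw [sum_incident_sub_inv_mul]
        have hq : (0 : ℝ) ≤ Fintype.card F := Nat.cast_nonneg _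
        split_ifs <;> first | linarith | simp_all [Prod.ext_iff]
    _ = Fintype.card F * #Q := by simp [mul_comm]

lemma card_incidences_sub_eq_sum_incidenceDefect (P Q : Finset (F × F)) :
    (#{x ∈ P ×ˢ Q | x.1.2 + x.2.2 = x.1.1 * x.2.1} : ℝ) - #P * #Q / Fintype.card F
      = ∑ p ∈ P, incidenceDefect Q p := by
  simp only [incidenceDefect, natCast_card_filter, sum_product, sum_sub_distrib, sum_const,
    nsmul_eq_mul, div_eq_mul_inv, mul_assoc]

theorem abs_card_incidences_sub_le_s13 (P Q : Finset (F × F)) :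
    |(#{x ∈ P ×ˢ Q | x.1.2 + x.2.2 = x.1.1 * x.2.1} : ℝ) - #P * #Q / Fintype.card F|
      ≤ √(Fintype.card F * (#P * #Q)) := by
  rw [card_incidences_sub_eq_sum_incidenceDefect]
  refine Real.abs_le_sqrt ?_
  calc (∑ p ∈ P, incidenceDefect Q p) ^ 2 ≤ (#P : ℝ) * ∑ p ∈ P, incidenceDefect Q p ^ 2 :=
        sq_sum_le_card_mul_sum_sq
    _ ≤ #P * ∑ p : F × F, incidenceDefect Q p ^ 2 := by
        gcongr
        exact subset_univ P
    _ ≤ #P * (Fintype.card F * #Q) := by gcongr; exact sum_sq_incidenceDefect_le Q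
    _ = Fintype.card F * (#P * #Q) := by ring

end Incidence


/-- **Sárközy-type.** Let `q` be a prime power. For each `x ∈ F_q^*`
let `X(x), Y(x) ⊆ F_q`, and put `T = (Σ_x |X(x)|)·(Σ_y |Y(y)|)`. Then the number `S`
of quadruples `(x,y,x',y')` with `x, y ∈ F_q^*`, `x' ∈ X(x)`, `y' ∈ Y(y)` and
`x' + y' = x·y` satisfies `|S − T/q| ≤ 2·√(q·T)`. -/
theorem solutions_sum_eq_product {F : Type*} [Field F] [Fintype F] [DecidableEq F]
    (X Y : Fˣ → Finset F) :
    |((Finset.univ.filter (fun t : Fˣ × Fˣ × F × F =>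
          t.2.2.1 ∈ X t.1 ∧ t.2.2.2 ∈ Y t.2.1 ∧
            t.2.2.1 + t.2.2.2 = (t.1 : F) * (t.2.1 : F))).card : ℝ)
        - ((∑ x : Fˣ, ((X x).card : ℝ)) * (∑ y : Fˣ, ((Y y).card : ℝ)))
          / (Fintype.card F : ℝ)|
      ≤ 2 * Real.sqrt ((Fintype.card F : ℝ)
          * ((∑ x : Fˣ, ((X x).card : ℝ)) * (∑ y : Fˣ, ((Y y).card : ℝ)))) := by
  have h := abs_card_incidences_sub_le_s13 (unitsGraph X) (unitsGraph Y)
  rw [← card_filter_units_eq_card_incidences, card_unitsGraph, card_unitsGraph] at h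
  push_cast at h
  exact h.trans (le_mul_of_one_le_left (Real.sqrt_nonneg _) one_le_two)
end

section
/- Let q be a prime power, let X₁, X₂ ⊆ F_q^* and X₃, X₄ ⊆ F_q. Then the number S of quadruples (x₁, x₂, x₃, x₄) ∈ X₁ × X₂ × X₃ × X₄ with x₁·x₂ = x₃ + x₄ satisfies |S − |X₁||X₂||X₃||X₄|/q| ≤ 2·√(q·|X₁||X₂||X₃||X₄|). -/
/-!
Fix a primitive additive character `ψ : F → ℂ` and put `S_X(t) = ∑_{x ∈ X} ψ(t x)`.
Orthogonality of `ψ` turns the count `S` into `q S = ∑_t A(t) S_{X₃}(t) S_{X₄}(t)`, where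
`A(t) = ∑_{x₁ ∈ X₁} S_{X₂}(-t x₁)`, and the term `t = 0` is `P = |X₁||X₂||X₃||X₄|`.
Parseval, `∑_t |S_X(t)|² = q |X|`, gives two estimates for the remaining terms: Cauchy–Schwarz
over `x₁` bounds `|A(t)|` by `√(q |X₁||X₂|)` for `t ≠ 0` (as `x₁ ↦ -t x₁` is injective), and
Cauchy–Schwarz over `t` bounds `∑_t |S_{X₃}(t) S_{X₄}(t)|` by `q √(|X₃||X₄|)`.
Hence `|q S - P| ≤ q √(q P)`.
-/

open Finset ComplexConjugate

namespace AddChar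

lemma exists_isPrimitive (F : Type*) [Field F] [Finite F] : ∃ ψ : AddChar F ℂ, ψ.IsPrimitive := by
  obtain ⟨ψ, hψ⟩ := exists_apply_ne_zero.2 (one_ne_zero : (1 : F) ≠ 0)
  exact ⟨ψ, IsPrimitive.of_ne_one fun h ↦ hψ (by simp [h])⟩

section CommRing

variable {R : Type*} [CommRing R] (ψ : AddChar R ℂ)

def charSum (X : Finset R) (t : R) : ℂ := ∑ x ∈ X, ψ (t * x)

@[simp] lemma charSum_zero (X : Finset R) : charSum ψ X 0 = #X := by
  simp [charSum]

variable [Fintype R]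

lemma conj_charSum (X : Finset R) (t : R) : conj (charSum ψ X t) = charSum ψ X (-t) := by
  simp only [charSum, map_sum, neg_mul, map_neg_eq_inv, Complex.inv_eq_conj (ψ.norm_apply _)]

variable [DecidableEq R] {ψ}

lemma card_mul_card_filter_eq (hψ : ψ.IsPrimitive) {α : Type*} (P : Finset α) (f g : α → R) :
    (Fintype.card R : ℂ) * #{p ∈ P | f p = g p} = ∑ t, ∑ p ∈ P, ψ (t * (g p - f p)) := by
  rw [sum_comm]
  simp_rw [sum_mulShift _ hψ, sub_eq_zero, eq_comm (a := g _), natCast_card_filter, mul_sum]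
  simp

lemma sum_norm_charSum_sq (hψ : ψ.IsPrimitive) (X : Finset R) :
    ∑ t, ‖charSum ψ X t‖ ^ 2 = Fintype.card R * #X := by
  have hdiag := card_mul_card_filter_eq hψ (X ×ˢ X) Prod.fst Prod.snd
  rw [← diag_eq_filter, diag_card] at hdiag
  apply Complex.ofReal_injective
  push_cast
  rw [hdiag]
  refine sum_congr rfl fun t _ ↦ ?_
  rw [← Complex.conj_mul', conj_charSum, charSum, charSum, sum_mul_sum, ← sum_product']
  refine sum_congr rfl fun p _ ↦ ?_
  rw [← map_add_eq_mul]
  ring_nf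

lemma norm_sum_charSum_mul_sq_le (hψ : ψ.IsPrimitive) (X Y : Finset R) {t : R} (ht : IsUnit t) :
    ‖∑ x ∈ X, charSum ψ Y (t * x)‖ ^ 2 ≤ #X * (Fintype.card R * #Y) :=
  calc ‖∑ x ∈ X, charSum ψ Y (t * x)‖ ^ 2
      ≤ (∑ x ∈ X, ‖charSum ψ Y (t * x)‖) ^ 2 := by gcongr; exact norm_sum_le _ _
    _ ≤ #X * ∑ x ∈ X, ‖charSum ψ Y (t * x)‖ ^ 2 := sq_sum_le_card_mul_sum_sq
    _ ≤ #X * ∑ x, ‖charSum ψ Y (t * x)‖ ^ 2 :=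
        mul_le_mul_of_nonneg_left (sum_le_univ_sum_of_nonneg fun _ ↦ sq_nonneg _) (by positivity)
    _ = #X * (Fintype.card R * #Y) := by
        rw [Fintype.sum_equiv (Units.mulLeft ht.unit) _ (fun y ↦ ‖charSum ψ Y y‖ ^ 2)
          (fun x ↦ by rw [Units.mulLeft_apply, ht.unit_spec]), sum_norm_charSum_sq hψ]

lemma card_mul_card_filter_mul_eq_add (hψ : ψ.IsPrimitive) (X₁ X₂ X₃ X₄ : Finset R) :
    (Fintype.card R : ℂ) * #{p ∈ X₁ ×ˢ X₂ ×ˢ X₃ ×ˢ X₄ | p.1 * p.2.1 = p.2.2.1 + p.2.2.2} =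
      ∑ t, (∑ x ∈ X₁, charSum ψ X₂ (-t * x)) * charSum ψ X₃ t * charSum ψ X₄ t := by
  rw [card_mul_card_filter_eq hψ]
  refine sum_congr rfl fun t _ ↦ ?_
  have hsplit : ∀ a b c d : R,
      ψ (t * (c + d - a * b)) = ψ (-t * a * b) * ψ (t * c) * ψ (t * d) := fun a b c d ↦ by
    rw [← map_add_eq_mul, ← map_add_eq_mul]
    ring_nf
  simp only [sum_product, hsplit, charSum, ← mul_sum, ← sum_mul]

end CommRing

end AddChar

lemma norm_sum_mul_mul_le {ι : Type*} (s : Finset ι) (A B C : ι → ℂ) {a : ℝ} (ha : 0 ≤ a)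
    (hA : ∀ t ∈ s, ‖A t‖ ≤ a) :
    ‖∑ t ∈ s, A t * B t * C t‖ ≤ a * (√(∑ t ∈ s, ‖B t‖ ^ 2) * √(∑ t ∈ s, ‖C t‖ ^ 2)) :=
  calc ‖∑ t ∈ s, A t * B t * C t‖
      ≤ ∑ t ∈ s, ‖A t‖ * (‖B t‖ * ‖C t‖) := by
        refine (norm_sum_le _ _).trans_eq (sum_congr rfl fun t _ ↦ ?_)
        rw [norm_mul, norm_mul, mul_assoc]
    _ ≤ ∑ t ∈ s, a * (‖B t‖ * ‖C t‖) := by gcongr with t ht; exact hA t ht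
    _ ≤ a * (√(∑ t ∈ s, ‖B t‖ ^ 2) * √(∑ t ∈ s, ‖C t‖ ^ 2)) := by
        rw [← mul_sum]; gcongr; exact Real.sum_mul_le_sqrt_mul_sqrt _ _ _

open AddChar in
theorem abs_card_mul_card_filter_mul_eq_add_sub_le {F : Type*} [Field F] [Fintype F]
    [DecidableEq F] (X₁ X₂ X₃ X₄ : Finset F) :
    |(Fintype.card F : ℝ) * #{p ∈ X₁ ×ˢ X₂ ×ˢ X₃ ×ˢ X₄ | p.1 * p.2.1 = p.2.2.1 + p.2.2.2}
        - #X₁ * #X₂ * #X₃ * #X₄|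
      ≤ Fintype.card F * √(Fintype.card F * (#X₁ * #X₂ * #X₃ * #X₄)) := by
  obtain ⟨ψ, hψ⟩ := exists_isPrimitive F
  set q : ℝ := (Fintype.card F : ℝ)
  set A : F → ℂ := fun t ↦ ∑ x ∈ X₁, charSum ψ X₂ (-t * x)
  have hcount := card_mul_card_filter_mul_eq_add hψ X₁ X₂ X₃ X₄
  rw [← add_sum_erase _ _ (mem_univ 0)] at hcount
  have hA : ∀ t ∈ univ.erase 0, ‖A t‖ ≤ √(#X₁ * (q * #X₂)) := fun t ht ↦ Real.le_sqrt_of_sq_le <|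
    norm_sum_charSum_mul_sq_le hψ _ _ (neg_ne_zero.2 (ne_of_mem_erase ht)).isUnit
  have hB : ∀ X : Finset F, ∑ t ∈ univ.erase 0, ‖charSum ψ X t‖ ^ 2 ≤ q * #X := fun X ↦
    (sum_le_univ_sum_of_nonneg fun _ ↦ sq_nonneg _).trans_eq (sum_norm_charSum_sq hψ X)
  calc _ = ‖∑ t ∈ univ.erase 0, A t * charSum ψ X₃ t * charSum ψ X₄ t‖ := by
        rw [← Real.norm_eq_abs, ← Complex.norm_real]
        push_cast [q]
        simp [hcount, A, sum_const, mul_assoc]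
    _ ≤ √(#X₁ * (q * #X₂)) * (√(q * #X₃) * √(q * #X₄)) :=
        (norm_sum_mul_mul_le _ _ _ _ (Real.sqrt_nonneg _) hA).trans (by gcongr <;> exact hB _)
    _ = q * √(q * (#X₁ * #X₂ * #X₃ * #X₄)) := by
        rw [← Real.sqrt_mul (by positivity), ← Real.sqrt_mul (by positivity),
          show (#X₁ * (q * #X₂) * (q * #X₃ * (q * #X₄)) : ℝ) =
            q ^ 2 * (q * (#X₁ * #X₂ * #X₃ * #X₄)) by ring,
          Real.sqrt_mul (by positivity), Real.sqrt_sq (by positivity)]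

theorem solutions_product_eq_sum_general {F : Type*} [Field F] [Fintype F] [DecidableEq F]
    (X₁ X₂ X₃ X₄ : Finset F) :
    |(((X₁ ×ˢ X₂ ×ˢ X₃ ×ˢ X₄).filter (fun t : F × F × F × F =>
          t.1 * t.2.1 = t.2.2.1 + t.2.2.2)).card : ℝ)
        - (X₁.card : ℝ) * X₂.card * X₃.card * X₄.card / (Fintype.card F : ℝ)|
      ≤ 2 * Real.sqrt ((Fintype.card F : ℝ)
          * ((X₁.card : ℝ) * X₂.card * X₃.card * X₄.card)) := by
  have hq : (0 : ℝ) < Fintype.card F := Nat.cast_pos.2 Fintype.card_pos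
  have key := abs_card_mul_card_filter_mul_eq_add_sub_le X₁ X₂ X₃ X₄
  rw [sub_div' hq.ne', mul_comm, abs_div, abs_of_pos hq, div_le_iff₀ hq]
  linarith [mul_nonneg hq.le (Real.sqrt_nonneg ((Fintype.card F : ℝ) * (#X₁ * #X₂ * #X₃ * #X₄)))]

/-- **Sárközy.** Let `q` be a prime power, `X₁, X₂ ⊆ F_q^*`,
`X₃, X₄ ⊆ F_q`. The number `S` of quadruples `(x₁,x₂,x₃,x₄) ∈ X₁ × X₂ × X₃ × X₄`
with `x₁·x₂ = x₃ + x₄` satisfies `|S − |X₁||X₂||X₃||X₄|/q| ≤ 2√(q·|X₁||X₂||X₃||X₄|)`. -/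
theorem solutions_product_eq_sum {F : Type*} [Field F] [Fintype F] [DecidableEq F]
    (X₁ X₂ X₃ X₄ : Finset F) (h₁ : (0 : F) ∉ X₁) (h₂ : (0 : F) ∉ X₂) :
    |(((X₁ ×ˢ X₂ ×ˢ X₃ ×ˢ X₄).filter (fun t : F × F × F × F =>
          t.1 * t.2.1 = t.2.2.1 + t.2.2.2)).card : ℝ)
        - (X₁.card : ℝ) * X₂.card * X₃.card * X₄.card / (Fintype.card F : ℝ)|
      ≤ 2 * Real.sqrt ((Fintype.card F : ℝ)
          * ((X₁.card : ℝ) * X₂.card * X₃.card * X₄.card)) :=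
  solutions_product_eq_sum_general X₁ X₂ X₃ X₄
end

section
/- Let q be a prime power, let X₁, X₂ ⊆ F_q^* and X₃, X₄ ⊆ F_q. Then the number S of quadruples (x₁, x₂, x₃, x₄) ∈ X₁ × X₂ × X₃ × X₄ with x₂·x₃ − x₁·x₄ = 1 satisfies |S − |X₁||X₂||X₃||X₄|/q| ≤ 2·√(q·|X₁||X₂||X₃||X₄|). -/
/-!
Write `det₂ v w` for the determinant of `v = (x₃, x₄)` and `w = (x₁, x₂)`, so that `S` counts the
incidences `det₂ v w = 1` between `W = X₁ × X₂` and `P = X₃ × X₄`. For `w ≠ 0` the solutions `v`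
form an affine line with `q` points, and two distinct `w` share at most one solution `v`. A second
moment computation then bounds the variance of `N(v) = #{w ∈ W | det₂ v w = 1}` over the `q²`
points `v` by `q |W|`, and Cauchy–Schwarz over `v ∈ P` bounds `|S - |W||P|/q|` by `√(|P| q |W|)`.
-/

open Finset

section Incidence

variable {α β : Type*} [Fintype β] (R : α → β → Prop) [∀ a b, Decidable (R a b)]
  (W : Finset α) {k : ℕ}

theorem sum_card_filter_rel_eq (hdeg : ∀ a ∈ W, #{b | R a b} = k) :
    ∑ b, #{a ∈ W | R a b} = #W * k := by
  have := sum_card_bipartiteAbove_eq_sum_card_bipartiteBelow R (s := W) (t := univ)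
  simp only [bipartiteAbove, bipartiteBelow] at this
  rw [← this, sum_congr rfl hdeg, sum_const, smul_eq_mul]

theorem sum_sq_card_filter_rel_add_card_le [DecidableEq α] (hdeg : ∀ a ∈ W, #{b | R a b} = k)
    (hcodeg : ∀ a ∈ W, ∀ a' ∈ W, a ≠ a' → #{b | R a b ∧ R a' b} ≤ 1) :
    ∑ b, #{a ∈ W | R a b} ^ 2 + #W ≤ #W * (k + #W) := by
  have hsq : ∑ b, #{a ∈ W | R a b} ^ 2 = ∑ a ∈ W, ∑ a' ∈ W, #{b | R a b ∧ R a' b} := by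
    have := sum_card_bipartiteAbove_eq_sum_card_bipartiteBelow
      (fun p b => R p.1 b ∧ R p.2 b) (s := W ×ˢ W) (t := univ)
    simp only [bipartiteAbove, bipartiteBelow] at this
    rw [← sum_product', this]
    refine sum_congr rfl fun b _ => ?_
    rw [sq, ← card_product]
    congr 1
    ext p
    simp [and_and_and_comm]
  have hrow : ∀ a ∈ W, ∑ a' ∈ W, #{b | R a b ∧ R a' b} + 1 ≤ k + #W := by
    intro a ha
    rw [← add_sum_erase W _ ha, ← card_erase_add_one ha]
    simp only [and_self, hdeg a ha]
    have := sum_le_card_nsmul (W.erase a) _ 1 fun a' ha' =>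
      hcodeg a ha a' (mem_erase.1 ha').2 (mem_erase.1 ha').1.symm
    simp only [smul_eq_mul, mul_one] at this
    omega
  calc ∑ b, #{a ∈ W | R a b} ^ 2 + #W
      = ∑ a ∈ W, (∑ a' ∈ W, #{b | R a b ∧ R a' b} + 1) := by
        rw [hsq, sum_add_distrib, card_eq_sum_ones]
    _ ≤ #W * (k + #W) := by
        simpa using sum_le_card_nsmul W _ _ hrow

theorem sum_sq_card_filter_rel_sub_div_le [DecidableEq α] (hβ : Fintype.card β = k ^ 2)
    (hdeg : ∀ a ∈ W, #{b | R a b} = k)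
    (hcodeg : ∀ a ∈ W, ∀ a' ∈ W, a ≠ a' → #{b | R a b ∧ R a' b} ≤ 1) :
    ∑ b, ((#{a ∈ W | R a b} : ℝ) - #W / k) ^ 2 ≤ k * #W := by
  rcases Nat.eq_zero_or_pos k with rfl | hk
  · have : IsEmpty β := Fintype.card_eq_zero_iff.1 (by simpa using hβ)
    simp
  have hsum : ∑ b, (#{a ∈ W | R a b} : ℝ) = #W * k := by
    exact_mod_cast sum_card_filter_rel_eq R W hdeg
  have hsq : ∑ b, (#{a ∈ W | R a b} : ℝ) ^ 2 + #W ≤ #W * (k + #W) := by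
    exact_mod_cast sum_sq_card_filter_rel_add_card_le R W hdeg hcodeg
  simp only [sub_sq, sum_add_distrib, sum_sub_distrib, ← sum_mul, ← mul_sum, sum_const, card_univ,
    hβ, hsum, nsmul_eq_mul]
  push_cast
  field_simp
  linarith [(#W).cast_nonneg (α := ℝ)]

end Incidence

section Det

variable {R : Type*} [CommRing R]

def det₂ (a b : R × R) : R := a.1 * b.2 - a.2 * b.1

theorem det₂_swap (a b : R × R) : det₂ a b = -det₂ b a := by
  simp only [det₂]; ring

theorem det₂_smul (a b c : R × R) : det₂ a b • c = det₂ c b • a + det₂ a c • b := by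
  ext <;> simp only [det₂, Prod.smul_fst, Prod.smul_snd, Prod.fst_add, Prod.snd_add, smul_eq_mul]
    <;> ring

theorem card_filter_mul_sub_mul_eq_one [DecidableEq R] (X₁ X₂ X₃ X₄ : Finset R) :
    #{t ∈ X₁ ×ˢ X₂ ×ˢ X₃ ×ˢ X₄ | t.2.1 * t.2.2.1 - t.1 * t.2.2.2 = 1}
      = ∑ v ∈ X₃ ×ˢ X₄, #{w ∈ X₁ ×ˢ X₂ | det₂ v w = 1} := by
  simp only [card_filter]
  rw [sum_comm]
  simp only [sum_product, det₂, mul_comm]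

variable {F : Type*} [Field F]

theorem exists_det₂_eq_one {w : F × F} (hw : w ≠ 0) : ∃ u, det₂ u w = 1 := by
  by_cases h₁ : w.1 = 0
  · have h₂ : w.2 ≠ 0 := fun h₂ => hw (Prod.ext h₁ h₂)
    exact ⟨(w.2⁻¹, 0), by simp [det₂, h₂]⟩
  · exact ⟨(0, -w.1⁻¹), by simp [det₂, h₁]⟩

variable [Fintype F] [DecidableEq F]

theorem card_filter_det₂_eq {w : F × F} (hw : w ≠ 0) (c : F) :
    #{v : F × F | det₂ v w = c} = Fintype.card F := by
  obtain ⟨u, hu⟩ := exists_det₂_eq_one hw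
  have hline : ({v : F × F | det₂ v w = c} : Finset _) = univ.image fun t : F => c • u + t • w := by
    ext v
    simp only [mem_filter, mem_univ, true_and, mem_image]
    constructor
    · rintro rfl
      exact ⟨det₂ u v, by simpa [hu] using (det₂_smul u w v).symm⟩
    · rintro ⟨t, rfl⟩
      simp only [det₂, Prod.smul_fst, Prod.smul_snd, Prod.fst_add, Prod.snd_add,
        smul_eq_mul] at hu ⊢
      linear_combination c * hu
  rw [hline, card_image_of_injective _ fun s t h => smul_left_injective F hw (add_left_cancel h),
    card_univ]

theorem card_filter_det₂_eq_one_and_le_one {w w' : F × F} (hww' : w ≠ w') :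
    #{v : F × F | det₂ v w = 1 ∧ det₂ v w' = 1} ≤ 1 := by
  have hsolve : ∀ v, det₂ v w = 1 → det₂ v w' = 1 → v = (det₂ w w')⁻¹ • (w - w') := by
    intro v h h'
    have hv : det₂ w w' • v = w - w' := by
      rw [det₂_smul, h', det₂_swap w v, h, one_smul, neg_smul, one_smul, sub_eq_add_neg]
    have hdet : det₂ w w' ≠ 0 := by
      rintro h0
      rw [h0, zero_smul, eq_comm, sub_eq_zero] at hv
      exact hww' hv
    rw [← hv, smul_smul, inv_mul_cancel₀ hdet, one_smul]
  refine card_le_one.2 fun v hv v' hv' => ?_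
  simp only [mem_filter, mem_univ, true_and] at hv hv'
  rw [hsolve v hv.1 hv.2, hsolve v' hv'.1 hv'.2]

end Det

theorem solutions_bilinear_eq_one_general {F : Type*} [Field F] [Fintype F] [DecidableEq F]
    (X₁ X₂ X₃ X₄ : Finset F) (h₁ : (0 : F) ∉ X₁) :
    |(((X₁ ×ˢ X₂ ×ˢ X₃ ×ˢ X₄).filter (fun t : F × F × F × F =>
          t.2.1 * t.2.2.1 - t.1 * t.2.2.2 = 1)).card : ℝ)
        - (X₁.card : ℝ) * X₂.card * X₃.card * X₄.card / (Fintype.card F : ℝ)|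
      ≤ 2 * Real.sqrt ((Fintype.card F : ℝ)
          * ((X₁.card : ℝ) * X₂.card * X₃.card * X₄.card)) := by
  set W := X₁ ×ˢ X₂
  set P := X₃ ×ˢ X₄
  set q := Fintype.card F
  set N : F × F → ℝ := fun v => #{w ∈ W | det₂ v w = 1} - #W / q
  have hW : (0 : F × F) ∉ W := fun h => h₁ (mem_product.1 h).1
  have hvar : ∑ v, N v ^ 2 ≤ q * #W :=
    sum_sq_card_filter_rel_sub_div_le (fun w v => det₂ v w = 1) W
      (by rw [Fintype.card_prod, sq])
      (fun w hw => card_filter_det₂_eq (ne_of_mem_of_not_mem hw hW) 1)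
      (fun w _ w' _ => card_filter_det₂_eq_one_and_le_one)
  calc _ = |∑ v ∈ P, N v| := by
        rw [card_filter_mul_sub_mul_eq_one, sum_sub_distrib, sum_const, nsmul_eq_mul]
        simp only [W, P, card_product]
        push_cast
        ring_nf
    _ ≤ √(#P * ∑ v, N v ^ 2) := Real.abs_le_sqrt <| sq_sum_le_card_mul_sum_sq.trans <|
        mul_le_mul_of_nonneg_left (sum_le_univ_sum_of_nonneg fun v => sq_nonneg (N v)) (by positivity)
    _ ≤ √(#P * (q * #W)) := by gcongr
    _ = √(q * (#X₁ * #X₂ * #X₃ * #X₄)) := by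
        simp only [W, P, card_product]
        push_cast
        ring_nf
    _ ≤ 2 * √(q * (#X₁ * #X₂ * #X₃ * #X₄)) := le_mul_of_one_le_left (Real.sqrt_nonneg _) one_le_two

/-- **Sárközy.** Let `q` be a prime power, `X₁, X₂ ⊆ F_q^*`,
`X₃, X₄ ⊆ F_q`. The number `S` of quadruples `(x₁,x₂,x₃,x₄) ∈ X₁ × X₂ × X₃ × X₄`
with `x₂·x₃ − x₁·x₄ = 1` satisfies
`|S − |X₁||X₂||X₃||X₄|/q| ≤ 2√(q·|X₁||X₂||X₃||X₄|)`. -/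
theorem solutions_bilinear_eq_one {F : Type*} [Field F] [Fintype F] [DecidableEq F]
    (X₁ X₂ X₃ X₄ : Finset F) (h₁ : (0 : F) ∉ X₁) (h₂ : (0 : F) ∉ X₂) :
    |(((X₁ ×ˢ X₂ ×ˢ X₃ ×ˢ X₄).filter (fun t : F × F × F × F =>
          t.2.1 * t.2.2.1 - t.1 * t.2.2.2 = 1)).card : ℝ)
        - (X₁.card : ℝ) * X₂.card * X₃.card * X₄.card / (Fintype.card F : ℝ)|
      ≤ 2 * Real.sqrt ((Fintype.card F : ℝ)
          * ((X₁.card : ℝ) * X₂.card * X₃.card * X₄.card)) :=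
  solutions_bilinear_eq_one_general X₁ X₂ X₃ X₄ h₁
end

section
/- Let q be a prime power and let Q and Q′ be subgroups of the multiplicative group F_q^*. Then the number N = |{(x, y) ∈ Q × Q′ : x + y = 1}| satisfies |N − |Q||Q′|/q| ≤ 3·√q. -/
/-!
Let `a = [F^* : Q]` and `b = [F^* : Q']`. The `a` characters trivial on `Q` sum to `a` times the
indicator of `Q`, so `a b N = ∑ J(χ, ψ)` with `χ, ψ` running over the characters trivial on `Q`
and on `Q'` respectively. The trivial pair contributes `q - 2`, the `a + b - 2` pairs with exactly
one trivial character contribute `-1` each, and each of the remaining `(a - 1)(b - 1)` Jacobi sums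
has absolute value at most `√q`. Hence `|a b N - (q - a - b)| ≤ (a - 1)(b - 1)√q`, and with
`|Q| = (q - 1)/a`, `|Q'| = (q - 1)/b` this leaves an error of at most `√q + 2`.
-/

open Finset

namespace MulChar

variable {M R : Type*} [CommMonoid M] [CommRing R] [Finite M] [IsDomain R]

variable (R) in
noncomputable def annihilator (H : Subgroup Mˣ) : Finset (MulChar M R) :=
  (Set.toFinite {χ : MulChar M R | ∀ m ∈ H, χ m = 1}).toFinset

theorem mem_annihilator {H : Subgroup Mˣ} {χ : MulChar M R} :
    χ ∈ annihilator R H ↔ ∀ m ∈ H, χ m = 1 := by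
  simp [annihilator]

theorem one_mem_annihilator (H : Subgroup Mˣ) : 1 ∈ annihilator R H :=
  mem_annihilator.mpr fun m _ => one_apply_coe m

variable [HasEnoughRootsOfUnity R (Monoid.exponent Mˣ)]

theorem mem_annihilator_iff_mem_dual {H : Subgroup Mˣ} {χ : MulChar M R} :
    χ ∈ annihilator R H ↔ χ ∈ (subgroupOrderIsoSubgroupMulChar M R H).ofDual := by
  simp [mem_annihilator]

theorem forall_mem_annihilator_apply_eq_one_iff {H : Subgroup Mˣ} {u : Mˣ} :
    (∀ χ ∈ annihilator R H, χ u = 1) ↔ u ∈ H := by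
  simp_rw [mem_annihilator_iff_mem_dual, ← mem_subgroupOrderIsoSubgroupMulChar_symm_iff,
    OrderDual.toDual_ofDual, OrderIso.symm_apply_apply]

theorem card_annihilator (H : Subgroup Mˣ) : #(annihilator R H) = H.index := by
  rw [Subgroup.index, ← card_subgroupOrderIsoSubgroupMulChar (R := R), ← Fintype.card_coe,
    ← Nat.card_eq_fintype_card]
  exact Nat.card_congr (Equiv.subtypeEquivRight fun _ => mem_annihilator_iff_mem_dual)

/- Evaluation at `u` is a character of the finite group of characters trivial on `H`; it is
trivial exactly when `u ∈ H`, so this is orthogonality of characters of that group. -/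
open Classical in
theorem sum_annihilator_apply (H : Subgroup Mˣ) (u : Mˣ) :
    ∑ χ ∈ annihilator R H, χ u = if u ∈ H then (H.index : R) else 0 := by
  set X := (subgroupOrderIsoSubgroupMulChar M R H).ofDual
  have hfin : Fintype X := Fintype.ofFinite X
  let evalAt : X →* R := ((mulCharEquiv M R).symm u).toMonoidHom.comp X.subtype
  have hevalAt : evalAt = 1 ↔ u ∈ H := by
    rw [← forall_mem_annihilator_apply_eq_one_iff (R := R), MonoidHom.ext_iff]
    simp [evalAt, X, mem_annihilator_iff_mem_dual]
  rw [Finset.sum_subtype (F := hfin) _ (fun χ => mem_annihilator_iff_mem_dual),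
    Subgroup.index, ← card_subgroupOrderIsoSubgroupMulChar (R := R), Nat.card_eq_fintype_card]
  convert sum_hom_units evalAt using 1
  · simp [evalAt]
  · simp [hevalAt, X]

end MulChar

section FiniteField

variable {F : Type*} [Field F] [Fintype F]

theorem jacobiSum_eq_sum_units {R : Type*} [CommRing R] [DecidableEq F] (χ ψ : MulChar F R) :
    jacobiSum χ ψ = ∑ t : Fˣ × Fˣ with (t.1 : F) + t.2 = 1, χ t.1 * ψ t.2 := by
  rw [jacobiSum_eq_sum_sdiff]
  symm
  refine Finset.sum_bij (fun t _ => (t.1 : F)) ?_ ?_ ?_ ?_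
  · rintro ⟨x, y⟩ h
    simp only [mem_filter, mem_univ, true_and] at h
    simp only [mem_sdiff, mem_univ, mem_insert, mem_singleton, true_and, not_or]
    refine ⟨x.ne_zero, fun hx => y.ne_zero ?_⟩
    rw [eq_sub_of_add_eq' h, hx, sub_self]
  · rintro ⟨x, y⟩ h ⟨x', y'⟩ h' hxx'
    simp only [mem_filter, mem_univ, true_and] at h h'
    obtain rfl : x = x' := Units.ext hxx'
    exact Prod.ext rfl (Units.ext ((eq_sub_of_add_eq' h).trans (eq_sub_of_add_eq' h').symm))
  · intro x hx
    simp only [mem_sdiff, mem_univ, mem_insert, mem_singleton, true_and, not_or] at hx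
    exact ⟨(Units.mk0 x hx.1, Units.mk0 (1 - x) (sub_ne_zero.mpr (Ne.symm hx.2))),
      by simp, rfl⟩
  · rintro ⟨x, y⟩ h
    simp only [mem_filter, mem_univ, true_and] at h
    rw [eq_sub_of_add_eq' h]

open Classical in
theorem sum_sum_jacobiSum_annihilator [DecidableEq F] {R : Type*} [CommRing R] [IsDomain R]
    [HasEnoughRootsOfUnity R (Monoid.exponent Fˣ)] (Q Q' : Subgroup Fˣ) :
    ∑ χ ∈ MulChar.annihilator R Q, ∑ ψ ∈ MulChar.annihilator R Q', jacobiSum χ ψ =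
      Q.index * Q'.index * #{t : Fˣ × Fˣ | t.1 ∈ Q ∧ t.2 ∈ Q' ∧ (t.1 : F) + t.2 = 1} := by
  calc _ = ∑ t : Fˣ × Fˣ with (t.1 : F) + t.2 = 1,
        (∑ χ ∈ MulChar.annihilator R Q, χ t.1) * ∑ ψ ∈ MulChar.annihilator R Q', ψ t.2 := by
        simp_rw [jacobiSum_eq_sum_units, sum_mul_sum]
        exact (sum_congr rfl fun _ _ => sum_comm).trans sum_comm
    _ = ∑ t : Fˣ × Fˣ with (t.1 : F) + t.2 = 1,
        if t.1 ∈ Q ∧ t.2 ∈ Q' then (Q.index * Q'.index : R) else 0 := by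
        simp_rw [MulChar.sum_annihilator_apply, ite_zero_mul_ite_zero]
    _ = _ := by
        rw [← sum_filter, sum_const, filter_filter, nsmul_eq_mul, mul_comm]
        congr 3
        ext t
        simp only [mem_filter, mem_univ, true_and]
        tauto

theorem sum_sum_jacobiSum_eq {R : Type*} [CommRing R] [IsDomain R] [DecidableEq (MulChar F R)]
    {S T : Finset (MulChar F R)} (hS : 1 ∈ S) (hT : 1 ∈ T) :
    ∑ χ ∈ S, ∑ ψ ∈ T, jacobiSum χ ψ =
      (Fintype.card F - #S - #T : R) + ∑ χ ∈ S.erase 1, ∑ ψ ∈ T.erase 1, jacobiSum χ ψ := by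
  have hrow : ∀ ψ ∈ T.erase 1, jacobiSum 1 ψ = -1 := fun ψ hψ =>
    jacobiSum_one_nontrivial (ne_of_mem_erase hψ)
  have hcol : ∀ χ ∈ S.erase 1, jacobiSum χ 1 = -1 := fun χ hχ => by
    rw [jacobiSum_comm]
    exact jacobiSum_one_nontrivial (ne_of_mem_erase hχ)
  rw [← add_sum_erase S _ hS]
  simp_rw [← add_sum_erase T _ hT]
  rw [sum_add_distrib, sum_congr rfl hrow, sum_congr rfl hcol, jacobiSum_one_one, sum_const,
    sum_const, nsmul_eq_mul, nsmul_eq_mul, cast_card_erase_of_mem hS, cast_card_erase_of_mem hT]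
  ring

theorem jacobiSum_inv_inv_eq_conj (χ ψ : MulChar F ℂ) :
    jacobiSum χ⁻¹ ψ⁻¹ = starRingEnd ℂ (jacobiSum χ ψ) := by
  simp only [jacobiSum, map_sum, map_mul, starRingEnd_apply, MulChar.star_apply']

theorem norm_jacobiSum_le_sqrt {χ ψ : MulChar F ℂ} (hχ : χ ≠ 1) (hψ : ψ ≠ 1) :
    ‖jacobiSum χ ψ‖ ≤ √(Fintype.card F) := by
  rcases eq_or_ne (χ * ψ) 1 with hχψ | hχψ
  · obtain rfl : ψ = χ⁻¹ := eq_inv_of_mul_eq_one_right hχψ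
    have hnorm : ‖χ (-1)‖ = 1 := (pow_eq_one_iff_of_nonneg (norm_nonneg _) two_ne_zero).mp <| by
      rw [← norm_pow, ← map_pow, neg_one_sq, map_one, norm_one]
    rw [jacobiSum_nontrivial_inv hχ, norm_neg, hnorm, Real.one_le_sqrt]
    exact_mod_cast Fintype.card_pos
  · have hchar : ringChar ℂ ≠ ringChar F := by
      rw [ringChar.eq_zero]
      exact (CharP.ringChar_ne_zero_of_finite F).symm
    have hnormSq := jacobiSum_mul_jacobiSum_inv hchar hχ hψ hχψ
    rw [jacobiSum_inv_inv_eq_conj, Complex.mul_conj, ← Complex.ofReal_natCast,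
      Complex.ofReal_inj] at hnormSq
    rw [Complex.norm_def, hnormSq]

theorem norm_sum_sum_jacobiSum_sub_le {S T : Finset (MulChar F ℂ)} (hS : 1 ∈ S) (hT : 1 ∈ T) :
    ‖∑ χ ∈ S, ∑ ψ ∈ T, jacobiSum χ ψ - (Fintype.card F - #S - #T : ℂ)‖ ≤
      (#S - 1) * (#T - 1) * √(Fintype.card F) := by
  classical
  rw [sum_sum_jacobiSum_eq hS hT, add_sub_cancel_left]
  calc _ ≤ ∑ χ ∈ S.erase 1, ∑ ψ ∈ T.erase 1, ‖jacobiSum χ ψ‖ :=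
        (norm_sum_le _ _).trans (sum_le_sum fun _ _ => norm_sum_le _ _)
    _ ≤ ∑ χ ∈ S.erase 1, ∑ ψ ∈ T.erase 1, √(Fintype.card F) :=
        sum_le_sum fun _ hχ => sum_le_sum fun _ hψ =>
          norm_jacobiSum_le_sqrt (ne_of_mem_erase hχ) (ne_of_mem_erase hψ)
    _ = _ := by
        rw [sum_const, sum_const, nsmul_eq_mul, nsmul_eq_mul, cast_card_erase_of_mem hS,
          cast_card_erase_of_mem hT]
        ring

end FiniteField

theorem abs_sub_le_three_mul_sqrt_of_abs_mul_sub_le {a b q N : ℝ} (ha : 1 ≤ a) (hb : 1 ≤ b)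
    (hq : 1 ≤ q) (h : |a * b * N - (q - a - b)| ≤ (a - 1) * (b - 1) * √q) :
    |N - (q - 1) / a * ((q - 1) / b) / q| ≤ 3 * √q := by
  have hab : 0 < a * b := by positivity
  have habq : 0 < a * b * q := by positivity
  have hsqrt : 1 ≤ √q := Real.one_le_sqrt.mpr hq
  have hsplit : N - (q - 1) / a * ((q - 1) / b) / q =
      (a * b * N - (q - a - b)) / (a * b) - (a * q + b * q - 2 * q + 1) / (a * b * q) := by
    field_simp
    ring
  have hmain : |(a * b * N - (q - a - b)) / (a * b)| ≤ √q := by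
    rw [abs_div, abs_of_pos hab, div_le_iff₀ hab]
    nlinarith
  have hcorr : |(a * q + b * q - 2 * q + 1) / (a * b * q)| ≤ 2 * √q := by
    have hnum : 0 ≤ a * q + b * q - 2 * q + 1 := by nlinarith
    rw [abs_div, abs_of_nonneg hnum, abs_of_pos habq, div_le_iff₀ habq]
    calc a * q + b * q - 2 * q + 1 ≤ 2 * (a * b * q) := by
          nlinarith [mul_nonneg (sub_nonneg.mpr ha) (sub_nonneg.mpr hb)]
      _ ≤ 2 * √q * (a * b * q) := by nlinarith
  rw [hsplit]
  linarith [abs_sub ((a * b * N - (q - a - b)) / (a * b))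
    ((a * q + b * q - 2 * q + 1) / (a * b * q))]

/-- **Fermat equation in finite fields.** Let `q` be a prime power and
`Q, Q'` subgroups of `F_q^*`. Then `N = |{(x,y) ∈ Q × Q' : x + y = 1}|` satisfies
`|N − |Q||Q'|/q| ≤ 3√q`. -/
theorem fermat_subgroups {F : Type*} [Field F] [Fintype F] [DecidableEq F]
    (Q Q' : Subgroup Fˣ) :
    |((@Finset.filter (Fˣ × Fˣ)
          (fun t => t.1 ∈ Q ∧ t.2 ∈ Q' ∧ (t.1 : F) + (t.2 : F) = 1)
          (Classical.decPred _) Finset.univ).card : ℝ)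
        - (Nat.card Q : ℝ) * (Nat.card Q' : ℝ) / (Fintype.card F : ℝ)|
      ≤ 3 * Real.sqrt (Fintype.card F) := by
  classical
  have hbound := norm_sum_sum_jacobiSum_sub_le (MulChar.one_mem_annihilator (R := ℂ) Q)
    (MulChar.one_mem_annihilator Q')
  rw [sum_sum_jacobiSum_annihilator, MulChar.card_annihilator, MulChar.card_annihilator]
    at hbound
  have hcard (H : Subgroup Fˣ) : (Nat.card H : ℝ) = (Fintype.card F - 1) / H.index := by
    rw [eq_div_iff (Nat.cast_ne_zero.mpr H.index_ne_zero_of_finite), ← Nat.cast_mul,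
      H.card_mul_index, Nat.card_eq_fintype_card, Fintype.card_units,
      Nat.cast_pred Fintype.card_pos]
  have hindex (H : Subgroup Fˣ) : (1 : ℝ) ≤ H.index :=
    Nat.one_le_cast.mpr (Nat.one_le_iff_ne_zero.mpr H.index_ne_zero_of_finite)
  rw [hcard Q, hcard Q']
  refine abs_sub_le_three_mul_sqrt_of_abs_mul_sub_le (hindex Q) (hindex Q')
    (Nat.one_le_cast.mpr Fintype.card_pos) ?_
  rw [filter_congr_decidable, ← Real.norm_eq_abs, ← Complex.norm_real]
  simpa only [Complex.ofReal_sub, Complex.ofReal_mul, Complex.ofReal_natCast] using hbound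
end
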